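/- arXiv:math/0009238 — 6 statements merged into one kernel-verified Lean document; each statement's English description precedes it below -/
import Mathlib

section
/- Let w, J, H_N, λ_N, (P_n), K_{jj} be as in the context. Then for every N ∈ ℕ, λ_N ≥ 2π / ∑_{j=0}^N K_{jj}. -/
open MeasureTheory Real Filter Topology Polynomial Matrix

lemma aux_repr (P : ℕ → Polynomial ℝ) (hdeg : ∀ n, (P n).natDegree = n)
    (hc : ∀ n, (P n).coeff n ≠ 0) :
    ∀ (n : ℕ) (q : Polynomial ℝ), q.degree < (n : ℕ) →
      ∃ c : ℕ → ℝ, q = ∑ j ∈ Finset.range n, c j • P j := by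
  intro n
  induction n with
  | zero =>
    intro q hq
    refine ⟨0, ?_⟩
    simp only [Finset.range_zero, Finset.sum_empty]
    rw [← Polynomial.degree_eq_bot]
    exact Nat.WithBot.lt_zero_iff.mp (by exact_mod_cast hq)
  | succ n ih =>
    intro q hq
    set a : ℝ := q.coeff n / (P n).coeff n with ha
    have hq' : (q - a • P n).degree < (n : ℕ) := by
      refine Polynomial.degree_lt_iff_coeff_zero _ _ |>.mpr ?_
      intro m hm
      rcases eq_or_lt_of_le (by exact_mod_cast hm : (n:ℕ) ≤ m) with h | h
      · subst h
        simp only [Polynomial.coeff_sub, Polynomial.coeff_smul, smul_eq_mul, ha]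
        rw [div_mul_cancel₀ _ (hc n), sub_self]
      · have h1 : q.coeff m = 0 := by
          apply Polynomial.coeff_eq_zero_of_degree_lt
          exact lt_of_lt_of_le hq (by exact_mod_cast Nat.succ_le_of_lt h)
        have h2 : (P n).coeff m = 0 := by
          apply Polynomial.coeff_eq_zero_of_natDegree_lt
          rw [hdeg n]; exact h
        simp [h1, h2]
    obtain ⟨c, hc'⟩ := ih _ hq'
    refine ⟨Function.update c n a, ?_⟩
    rw [Finset.sum_range_succ, Function.update_self]
    have : ∑ j ∈ Finset.range n, Function.update c n a j • P j
        = ∑ j ∈ Finset.range n, c j • P j := by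
      apply Finset.sum_congr rfl
      intro j hj
      rw [Function.update_of_ne (Finset.mem_range.mp hj).ne]
    rw [this, ← hc']
    ring

lemma aux_int (J : Set ℝ) (w : ℝ → ℝ)
    (hint : ∀ k : ℕ, IntegrableOn (fun t => t ^ k * w t) J) :
    ∀ q : Polynomial ℝ, IntegrableOn (fun t => q.eval t * w t) J := by
  intro q
  induction q using Polynomial.induction_on' with
  | add p r hp hr =>
    have := hp.add hr
    exact this.congr (ae_of_all _ fun t => by simp [add_mul])
  | monomial n a =>
    have := (hint n).const_mul a
    exact this.congr (ae_of_all _ fun t => by simp [mul_assoc])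

lemma aux_cos_int (m : ℝ) (hm : m ≠ 0) (b : ℝ) :
    ∫ φ in (0:ℝ)..b, Real.cos (m * φ) = Real.sin (m * b) / m := by
  have D : ∀ x : ℝ, HasDerivAt (fun y : ℝ => Real.sin (m * y) / m) (Real.cos (m * x)) x := by
    intro x
    have h1 : HasDerivAt (fun y : ℝ => m * y) m x := by
      simpa using (hasDerivAt_id x).const_mul m
    have h2 := (Real.hasDerivAt_sin (m * x)).comp x h1
    have h3 := h2.div_const m
    simpa [mul_div_cancel_right₀ _ hm] using h3
  rw [intervalIntegral.integral_eq_sub_of_hasDerivAt (fun x _ => D x)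
      (Continuous.intervalIntegrable (by continuity) _ _)]
  simp

lemma aux_cos_int2 (j k : ℕ) :
    ∫ φ in (0:ℝ)..(2 * π), Real.cos (((j:ℝ) - (k:ℝ)) * φ)
      = if j = k then 2 * π else 0 := by
  rcases eq_or_ne j k with h | h
  · simp [h, two_pi_pos.le]
  · have hm : ((j:ℝ) - (k:ℝ)) ≠ 0 := by
      intro hz
      exact h (by exact_mod_cast sub_eq_zero.mp hz)
    rw [aux_cos_int _ hm, if_neg h]
    have : ((j:ℝ) - (k:ℝ)) * (2 * π) = ((2 * ((j:ℤ) - (k:ℤ)) : ℤ) : ℝ) * π := by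
      push_cast; ring
    rw [this, Real.sin_int_mul_pi, zero_div]

lemma aux_parseval (n : ℕ) (u : ℕ → ℝ) :
    ∫ φ in (0:ℝ)..(2 * π),
      ‖∑ j ∈ Finset.range n, (u j : ℂ) * Complex.exp ((j : ℂ) * (↑φ * Complex.I))‖ ^ 2
    = 2 * π * ∑ j ∈ Finset.range n, (u j) ^ 2 := by
  have key : ∀ φ : ℝ,
      ‖∑ j ∈ Finset.range n, (u j : ℂ) * Complex.exp ((j : ℂ) * (↑φ * Complex.I))‖ ^ 2
      = ∑ j ∈ Finset.range n, ∑ k ∈ Finset.range n,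
          u j * u k * Real.cos (((j:ℝ) - (k:ℝ)) * φ) := by
    intro φ
    set z : ℂ := ∑ j ∈ Finset.range n, (u j : ℂ) * Complex.exp ((j : ℂ) * (↑φ * Complex.I))
      with hz
    have harg : ∀ j : ℕ, (j : ℂ) * (↑φ * Complex.I) = (↑((j:ℝ) * φ)) * Complex.I := by
      intro j; push_cast; ring
    have hre : z.re = ∑ j ∈ Finset.range n, u j * Real.cos ((j:ℝ) * φ) := by
      rw [hz, Complex.re_sum]
      refine Finset.sum_congr rfl fun j _ => ?_
      rw [harg j, Complex.re_ofReal_mul, Complex.exp_ofReal_mul_I_re]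
    have him : z.im = ∑ j ∈ Finset.range n, u j * Real.sin ((j:ℝ) * φ) := by
      rw [hz, Complex.im_sum]
      refine Finset.sum_congr rfl fun j _ => ?_
      rw [harg j, Complex.im_ofReal_mul, Complex.exp_ofReal_mul_I_im]
    rw [Complex.sq_norm, Complex.normSq_apply, hre, him,
      Finset.sum_mul_sum, Finset.sum_mul_sum, ← Finset.sum_add_distrib]
    refine Finset.sum_congr rfl fun j _ => ?_
    rw [← Finset.sum_add_distrib]
    refine Finset.sum_congr rfl fun k _ => ?_
    have : ((j:ℝ) - (k:ℝ)) * φ = (j:ℝ) * φ - (k:ℝ) * φ := by ring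
    rw [this, Real.cos_sub]
    ring
  rw [intervalIntegral.integral_congr (fun φ _ => key φ)]
  rw [intervalIntegral.integral_finset_sum]
  · have : ∀ j ∈ Finset.range n,
        (∫ φ in (0:ℝ)..(2 * π), ∑ k ∈ Finset.range n,
          u j * u k * Real.cos (((j:ℝ) - (k:ℝ)) * φ))
        = u j ^ 2 * (2 * π) := by
      intro j hj
      rw [intervalIntegral.integral_finset_sum]
      · have : ∀ k ∈ Finset.range n,
            (∫ φ in (0:ℝ)..(2 * π), u j * u k * Real.cos (((j:ℝ) - (k:ℝ)) * φ))
            = if j = k then u j * u k * (2 * π) else 0 := by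
          intro k _
          rw [intervalIntegral.integral_const_mul, aux_cos_int2]
          split <;> simp
        rw [Finset.sum_congr rfl this, Finset.sum_ite_eq, if_pos hj]
        ring
      · intro k _
        exact Continuous.intervalIntegrable (by continuity) _ _
    rw [Finset.sum_congr rfl this, ← Finset.sum_mul]
    ring
  · intro j _
    apply Continuous.intervalIntegrable
    apply continuous_finset_sum
    intro k _
    continuity


/-- With `H N` the Hankel (moment) matrices of the weight `w`
on the interval `J`, `lam N` their smallest eigenvalues, and `(P n)` the
orthonormal polynomials for `w` with `K j = ∫₀^{2π} |P_j(e^{iφ})|² dφ`,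
one has the lower bound `lam N ≥ 2π / ∑_{j=0}^N K j`. -/
theorem smallest_eigenvalue_lower_bound
    (J : Set ℝ) (hJ : J.OrdConnected) (hJm : MeasurableSet J)
    (w : ℝ → ℝ) (hw : ∀ x ∈ J, 0 ≤ w x) (hwm : Measurable w)
    (μ : ℕ → ℝ) (hμ : ∀ k, μ k = ∫ t in J, t ^ k * w t)
    (hint : ∀ k : ℕ, IntegrableOn (fun t => t ^ k * w t) J)
    (hposint : ∀ p : Polynomial ℝ, p ≠ 0 → 0 < ∫ t in J, (p.eval t) ^ 2 * w t)
    (H : (N : ℕ) → Matrix (Fin (N + 1)) (Fin (N + 1)) ℝ)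
    (hH : ∀ N, ∀ j k : Fin (N + 1), H N j k = μ ((j : ℕ) + (k : ℕ)))
    (hpd : ∀ N, (H N).PosDef)
    (lam : ℕ → ℝ)
    (hlam : ∀ N, IsLeast
      {x : ℝ | Module.End.HasEigenvalue (Matrix.toLin' (H N)) x} (lam N))
    (P : ℕ → Polynomial ℝ)
    (hdeg : ∀ n, (P n).natDegree = n)
    (hlead : ∀ n, 0 < (P n).leadingCoeff)
    (horth : ∀ m n, (∫ t in J, (P m).eval t * (P n).eval t * w t) =
      if m = n then 1 else 0)
    (K : ℕ → ℝ)
    (hK : ∀ j, K j = ∫ φ in (0:ℝ)..(2 * π),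
      ‖Polynomial.aeval (Complex.exp (φ * Complex.I)) (P j)‖ ^ 2)
    (N : ℕ) :
    lam N ≥ 2 * π / ∑ j ∈ Finset.range (N + 1), K j := by
  -- eigenvector
  obtain ⟨v, hv⟩ := Module.End.HasEigenvalue.exists_hasEigenvector (hlam N).1
  have hvne : v ≠ 0 := hv.2
  have hmul : (H N).mulVec v = lam N • v := by
    have := hv.apply_eq_smul
    simpa [Matrix.toLin'_apply] using this
  set SS : ℝ := ∑ i : Fin (N + 1), v i ^ 2 with hSSdef
  have hSS : 0 < SS := by
    obtain ⟨i, hi⟩ := Function.ne_iff.mp hvne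
    exact Finset.sum_pos' (fun i _ => sq_nonneg _)
      ⟨i, Finset.mem_univ _, by simpa using sq_pos_of_ne_zero hi⟩
  have hdot : v ⬝ᵥ (H N).mulVec v = lam N * SS := by
    rw [hmul, dotProduct_smul, smul_eq_mul, hSSdef, dotProduct]
    simp [sq]
  -- the polynomial p with coefficients v
  set p : Polynomial ℝ := ∑ i : Fin (N + 1), Polynomial.C (v i) * Polynomial.X ^ (i : ℕ)
    with hpdef
  have hpdeg : p.degree < ((N + 1 : ℕ) : WithBot ℕ) := by
    exact_mod_cast Polynomial.degree_sum_fin_lt v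
  have hpeval : ∀ t : ℝ, p.eval t = ∑ i : Fin (N + 1), v i * t ^ (i : ℕ) := by
    intro t; rw [hpdef, Polynomial.eval_finset_sum]; simp
  set Q : ℝ := ∫ t in J, (p.eval t) ^ 2 * w t with hQdef
  -- Q equals the quadratic form
  have expand1 : ∀ t : ℝ, (p.eval t) ^ 2 * w t
      = ∑ j : Fin (N + 1), ∑ k : Fin (N + 1),
          (v j * v k) * (t ^ ((j : ℕ) + (k : ℕ)) * w t) := by
    intro t
    rw [hpeval, sq, Finset.sum_mul_sum, Finset.sum_mul]
    refine Finset.sum_congr rfl fun j _ => ?_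
    rw [Finset.sum_mul]
    refine Finset.sum_congr rfl fun k _ => ?_
    rw [pow_add]; ring
  have hQ1 : Q = v ⬝ᵥ (H N).mulVec v := by
    have h1 : Q = ∑ j : Fin (N + 1), ∑ k : Fin (N + 1),
        (v j * v k) * μ ((j : ℕ) + (k : ℕ)) := by
      rw [hQdef]
      rw [MeasureTheory.integral_congr_ae (Filter.Eventually.of_forall (fun t => expand1 t))]
      rw [MeasureTheory.integral_finset_sum]
      · refine Finset.sum_congr rfl fun j _ => ?_
        rw [MeasureTheory.integral_finset_sum]
        · refine Finset.sum_congr rfl fun k _ => ?_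
          rw [MeasureTheory.integral_const_mul, hμ]
        · exact fun k _ => (hint _).const_mul _
      · exact fun j _ => integrable_finset_sum _ (fun k _ => (hint _).const_mul _)
    rw [h1]
    simp only [dotProduct, Matrix.mulVec, hH, Finset.mul_sum]
    exact Finset.sum_congr rfl fun j _ => Finset.sum_congr rfl fun k _ => by ring
  -- expansion of p in the orthonormal polynomials
  have hc0 : ∀ n, (P n).coeff n ≠ 0 := by
    intro n
    have h := hlead n
    rw [Polynomial.leadingCoeff, hdeg n] at h
    exact ne_of_gt h
  obtain ⟨c, hcp⟩ := aux_repr P hdeg hc0 (N + 1) p hpdeg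
  have hPint : ∀ j k : ℕ, IntegrableOn (fun t => (P j).eval t * (P k).eval t * w t) J := by
    intro j k
    have := aux_int J w hint (P j * P k)
    simpa [Polynomial.eval_mul] using this
  have hpeval2 : ∀ t : ℝ, p.eval t
      = ∑ j ∈ Finset.range (N + 1), c j * (P j).eval t := by
    intro t
    rw [hcp, Polynomial.eval_finset_sum]
    exact Finset.sum_congr rfl fun j _ => by simp
  have expand2 : ∀ t : ℝ, (p.eval t) ^ 2 * w t
      = ∑ j ∈ Finset.range (N + 1), ∑ k ∈ Finset.range (N + 1),
          (c j * c k) * ((P j).eval t * (P k).eval t * w t) := by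
    intro t
    rw [hpeval2, sq, Finset.sum_mul_sum, Finset.sum_mul]
    refine Finset.sum_congr rfl fun j _ => ?_
    rw [Finset.sum_mul]
    exact Finset.sum_congr rfl fun k _ => by ring
  have hQ2 : Q = ∑ j ∈ Finset.range (N + 1), c j ^ 2 := by
    rw [hQdef]
    rw [MeasureTheory.integral_congr_ae (Filter.Eventually.of_forall (fun t => expand2 t))]
    rw [MeasureTheory.integral_finset_sum]
    · have h1 : ∀ j ∈ Finset.range (N + 1),
          (∫ t in J, ∑ k ∈ Finset.range (N + 1),
            (c j * c k) * ((P j).eval t * (P k).eval t * w t))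
          = c j ^ 2 := by
        intro j hj
        rw [MeasureTheory.integral_finset_sum]
        · have h2 : ∀ k ∈ Finset.range (N + 1),
              (∫ t in J, (c j * c k) * ((P j).eval t * (P k).eval t * w t))
              = if j = k then c j * c k else 0 := by
            intro k _
            rw [MeasureTheory.integral_const_mul, horth j k]
            split <;> simp
          rw [Finset.sum_congr rfl h2, Finset.sum_ite_eq, if_pos hj, sq]
        · exact fun k _ => (hPint j k).const_mul _
      exact Finset.sum_congr rfl h1
    · exact fun j _ => integrable_finset_sum _ (fun k _ => (hPint j _).const_mul _)
  have hQpos : 0 < Q := by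
    rw [hQ1]
    have := (hpd N).dotProduct_mulVec_pos hvne
    simpa using this
  have hlampos : 0 < lam N := by
    have hQ : Q = lam N * SS := by rw [hQ1, hdot]
    nlinarith
  -- Parseval on the circle for p
  set u : ℕ → ℝ := fun j => if h : j < N + 1 then v ⟨j, h⟩ else 0 with hu
  have haev : ∀ φ : ℝ, (Polynomial.aeval (Complex.exp (↑φ * Complex.I)) p : ℂ)
      = ∑ j ∈ Finset.range (N + 1), (u j : ℂ) * Complex.exp ((j : ℂ) * (↑φ * Complex.I)) := by
    intro φ
    rw [hpdef, map_sum]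
    have h1 : ∀ i : Fin (N + 1),
        (Polynomial.aeval (Complex.exp (↑φ * Complex.I)) (Polynomial.C (v i) * Polynomial.X ^ (i : ℕ)) : ℂ)
        = ((v i : ℝ) : ℂ) * Complex.exp (((i : ℕ) : ℂ) * (↑φ * Complex.I)) := by
      intro i
      rw [_root_.map_mul, map_pow, Polynomial.aeval_X, Polynomial.aeval_C, ← Complex.exp_nat_mul]
      norm_num
    rw [Finset.sum_congr rfl (fun i _ => h1 i), Finset.sum_fin_eq_sum_range]
    refine Finset.sum_congr rfl fun j hj => ?_
    have hj' := Finset.mem_range.mp hj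
    rw [dif_pos hj', hu]
    simp [hj']
  have hSSu : ∑ j ∈ Finset.range (N + 1), u j ^ 2 = SS := by
    rw [hSSdef, Finset.sum_fin_eq_sum_range]
    refine Finset.sum_congr rfl fun j hj => ?_
    have hj' := Finset.mem_range.mp hj
    rw [dif_pos hj', hu]
    simp [hj']
  have hpars : (∫ φ in (0:ℝ)..(2 * π),
      ‖(Polynomial.aeval (Complex.exp (↑φ * Complex.I)) p : ℂ)‖ ^ 2) = 2 * π * SS := by
    rw [intervalIntegral.integral_congr (g := fun φ =>
        ‖∑ j ∈ Finset.range (N + 1), (u j : ℂ) * Complex.exp ((j : ℂ) * (↑φ * Complex.I))‖ ^ 2)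
        (fun φ _ => by rw [haev φ])]
    rw [aux_parseval (N + 1) u, hSSu]
  -- continuity facts
  have contnorm : ∀ q : Polynomial ℝ,
      Continuous fun φ : ℝ => ‖(Polynomial.aeval (Complex.exp (↑φ * Complex.I)) q : ℂ)‖ ^ 2 := by
    intro q
    have h1 : Continuous fun φ : ℝ => Complex.exp (↑φ * Complex.I) :=
      Complex.continuous_exp.comp (Complex.continuous_ofReal.mul continuous_const)
    exact (((q.continuous_aeval).comp h1).norm).pow 2
  -- pointwise Cauchy–Schwarz bound
  set T : ℝ := ∑ j ∈ Finset.range (N + 1), K j with hT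
  have hptwise : ∀ φ : ℝ,
      ‖(Polynomial.aeval (Complex.exp (↑φ * Complex.I)) p : ℂ)‖ ^ 2
      ≤ Q * ∑ j ∈ Finset.range (N + 1),
          ‖(Polynomial.aeval (Complex.exp (↑φ * Complex.I)) (P j) : ℂ)‖ ^ 2 := by
    intro φ
    set z : ℂ := Complex.exp (↑φ * Complex.I) with hz
    have h1 : (Polynomial.aeval z p : ℂ)
        = ∑ j ∈ Finset.range (N + 1), c j • (Polynomial.aeval z (P j) : ℂ) := by
      rw [hcp, map_sum]
      exact Finset.sum_congr rfl fun j _ => by rw [_root_.map_smul]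
    have h2 : ‖(Polynomial.aeval z p : ℂ)‖
        ≤ ∑ j ∈ Finset.range (N + 1), |c j| * ‖(Polynomial.aeval z (P j) : ℂ)‖ := by
      rw [h1]
      refine (norm_sum_le _ _).trans ?_
      refine Finset.sum_le_sum fun j _ => ?_
      rw [norm_smul, Real.norm_eq_abs]
    have h3 : ‖(Polynomial.aeval z p : ℂ)‖ ^ 2
        ≤ (∑ j ∈ Finset.range (N + 1), |c j| * ‖(Polynomial.aeval z (P j) : ℂ)‖) ^ 2 :=
      pow_le_pow_left₀ (norm_nonneg _) h2 2
    have h4 := Finset.sum_mul_sq_le_sq_mul_sq (Finset.range (N + 1))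
      (fun j => |c j|) (fun j => ‖(Polynomial.aeval z (P j) : ℂ)‖)
    have h5 : ∑ j ∈ Finset.range (N + 1), |c j| ^ 2 = Q := by
      rw [hQ2]
      exact Finset.sum_congr rfl fun j _ => sq_abs _
    calc ‖(Polynomial.aeval z p : ℂ)‖ ^ 2
        ≤ (∑ j ∈ Finset.range (N + 1), |c j| * ‖(Polynomial.aeval z (P j) : ℂ)‖) ^ 2 := h3
      _ ≤ (∑ j ∈ Finset.range (N + 1), |c j| ^ 2) *
            ∑ j ∈ Finset.range (N + 1), ‖(Polynomial.aeval z (P j) : ℂ)‖ ^ 2 := h4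
      _ = Q * ∑ j ∈ Finset.range (N + 1), ‖(Polynomial.aeval z (P j) : ℂ)‖ ^ 2 := by rw [h5]
  have hCS : (∫ φ in (0:ℝ)..(2 * π),
      ‖(Polynomial.aeval (Complex.exp (↑φ * Complex.I)) p : ℂ)‖ ^ 2) ≤ Q * T := by
    have h0 : (0:ℝ) ≤ 2 * π := by positivity
    have hmono := intervalIntegral.integral_mono_on (μ := volume) h0
      ((contnorm p).intervalIntegrable _ _)
      ((continuous_const.mul (continuous_finset_sum _ fun j _ => contnorm (P j))).intervalIntegrable _ _)
      (fun φ _ => hptwise φ)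
    have heq : (∫ φ in (0:ℝ)..(2 * π), Q * ∑ j ∈ Finset.range (N + 1),
        ‖(Polynomial.aeval (Complex.exp (↑φ * Complex.I)) (P j) : ℂ)‖ ^ 2) = Q * T := by
      rw [intervalIntegral.integral_const_mul,
        intervalIntegral.integral_finset_sum (fun j _ => (contnorm (P j)).intervalIntegrable _ _)]
      rw [hT]
      congr 1
      exact Finset.sum_congr rfl fun j _ => (hK j).symm
    calc (∫ φ in (0:ℝ)..(2 * π), ‖(Polynomial.aeval (Complex.exp (↑φ * Complex.I)) p : ℂ)‖ ^ 2)
        ≤ _ := hmono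
      _ = Q * T := heq
  -- conclusion
  have hQval : Q = lam N * SS := by rw [hQ1, hdot]
  have hkey : 2 * π * SS ≤ lam N * SS * T := by
    rw [← hQval, ← hpars]
    exact hCS
  have hmain : 2 * π ≤ lam N * T := by
    have h1 : 2 * π * SS ≤ (lam N * T) * SS := by nlinarith
    exact le_of_mul_le_mul_right h1 hSS
  have hTpos : 0 < T := by nlinarith [Real.pi_pos]
  rw [ge_iff_le, div_le_iff₀ hTpos]
  exact hmain
end

section
/- Let β > 0, b > 0 and t < 0, and set ζ := −t/b. Then (√(−t) · √(b−t) / (2π)) · ∫₀^b y^β / ((y−t) √(y(b−y))) dy = (Γ(2β)/(β · 4^β · Γ(β)²)) · b^β · √(ζ/(1+ζ)) · ₂F₁(1, 1/2; β+1; 1/(1+ζ)). -/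
open Real MeasureTheory intervalIntegral

lemma real_beta {a c : ℝ} (ha : 0 < a) (hc : 0 < c) :
    ∫ u in (0:ℝ)..1, u ^ (a-1) * (1-u) ^ (c-1)
      = Real.Gamma a * Real.Gamma c / Real.Gamma (a+c) := by
  have key := Complex.Gamma_mul_Gamma_eq_betaIntegral
    (s := (a:ℂ)) (t := (c:ℂ)) (by simpa using ha) (by simpa using hc)
  have hof : (Complex.betaIntegral a c)
      = ((∫ u in (0:ℝ)..1, u ^ (a-1) * (1-u) ^ (c-1) : ℝ) : ℂ) := by
    rw [Complex.betaIntegral, ← intervalIntegral.integral_ofReal]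
    apply intervalIntegral.integral_congr
    intro x hx
    rw [Set.uIcc_of_le (by norm_num : (0:ℝ) ≤ 1)] at hx
    have hx0 : (0:ℝ) ≤ x := hx.1
    have hx1 : (0:ℝ) ≤ 1 - x := by linarith [hx.2]
    simp only []
    rw [Complex.ofReal_mul, Complex.ofReal_cpow hx0, Complex.ofReal_cpow hx1]
    push_cast
    ring
  have hG : Real.Gamma (a+c) ≠ 0 := (Real.Gamma_pos_of_pos (by linarith)).ne'
  have := key
  rw [hof, ← Complex.ofReal_add, Complex.Gamma_ofReal, Complex.Gamma_ofReal,
    Complex.Gamma_ofReal, ← Complex.ofReal_mul, ← Complex.ofReal_mul] at this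
  have h2 := Complex.ofReal_injective this
  field_simp
  linarith [h2]

lemma Gamma_ascPoch {s : ℝ} (hs : 0 < s) (n : ℕ) :
    Real.Gamma (s + n) = Real.Gamma s * (ascPochhammer ℝ n).eval s := by
  induction n with
  | zero => simp
  | succ n ih =>
      have h : s + (n:ℝ) ≠ 0 := by positivity
      have e : s + ((n:ℝ)+1) = (s + n) + 1 := by ring
      rw [Nat.cast_succ, e, Real.Gamma_add_one h, ih, ascPochhammer_succ_eval]
      ring

lemma beta_integrableOn {a c : ℝ} (ha : 0 < a) (hc : 0 < c) :
    IntegrableOn (fun u : ℝ => u ^ (a-1) * (1-u) ^ (c-1)) (Set.Ioo 0 1) volume := by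
  have h := Complex.betaIntegral_convergent (u := (a:ℂ)) (v := (c:ℂ))
    (by simpa using ha) (by simpa using hc)
  rw [intervalIntegrable_iff, Set.uIoc_of_le zero_le_one] at h
  have h2 := (h.mono_set Set.Ioo_subset_Ioc_self).re
  apply h2.congr
  rw [Filter.eventuallyEq_iff_exists_mem]
  refine ⟨Set.Ioo 0 1, ?_, ?_⟩
  · exact (ae_restrict_iff' measurableSet_Ioo).2 (Filter.Eventually.of_forall fun x hx => hx)
  · intro x hx
    have hx0 : (0:ℝ) ≤ x := hx.1.le
    have hx1 : (0:ℝ) ≤ 1 - x := by linarith [hx.2.le]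
    simp only []
    rw [show ((a:ℂ)-1) = ((a-1 : ℝ) : ℂ) by push_cast; ring,
      show ((c:ℂ)-1) = ((c-1 : ℝ) : ℂ) by push_cast; ring,
      ← Complex.ofReal_cpow hx0, show ((1:ℂ) - (x:ℂ)) = ((1 - x : ℝ) : ℂ) by push_cast; ring,
      ← Complex.ofReal_cpow hx1, ← Complex.ofReal_mul]
    simp

lemma beta_Ioo {a c : ℝ} (ha : 0 < a) (hc : 0 < c) :
    ∫ u in Set.Ioo (0:ℝ) 1, u ^ (a-1) * (1-u) ^ (c-1)
      = Real.Gamma a * Real.Gamma c / Real.Gamma (a+c) := by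
  rw [← MeasureTheory.integral_Ioc_eq_integral_Ioo,
    ← intervalIntegral.integral_of_le zero_le_one]
  exact real_beta ha hc

noncomputable def F21 (a b c x : ℝ) : ℝ :=
  ∑' r : ℕ, ((ascPochhammer ℝ r).eval a * (ascPochhammer ℝ r).eval b /
    ((ascPochhammer ℝ r).eval c * (r.factorial : ℝ))) * x ^ r

/-- For `β > 0`, `b > 0`, `t < 0` and `ζ = −t/b`,
`(√(−t)√(b−t)/(2π)) ∫₀^b y^β/((y−t)√(y(b−y))) dy
  = (Γ(2β)/(β·4^β·Γ(β)²)) · b^β · √(ζ/(1+ζ)) · ₂F₁(1,1/2;β+1;1/(1+ζ))`. -/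
theorem integral_eq_hypergeom
    (β b t : ℝ) (hβ : 0 < β) (hb : 0 < b) (ht : t < 0) :
    Real.sqrt (-t) * Real.sqrt (b - t) / (2 * π) *
        ∫ y in (0:ℝ)..b, y ^ β / ((y - t) * Real.sqrt (y * (b - y))) =
      (Real.Gamma (2 * β) / (β * (4:ℝ) ^ β * Real.Gamma β ^ 2)) * b ^ β *
        Real.sqrt ((-t / b) / (1 + -t / b)) *
        F21 1 (1/2) (β + 1) (1 / (1 + -t / b)) := by
  set ζ : ℝ := -t/b with hζdef
  have hζ : 0 < ζ := div_pos (neg_pos.2 ht) hb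
  have h1ζ : 0 < 1 + ζ := by linarith
  set x : ℝ := 1/(1+ζ) with hxdef
  have hx0 : 0 < x := by positivity
  have hx1 : x < 1 := by
    rw [hxdef, div_lt_one h1ζ]; linarith
  have hbζ : b * ζ = -t := by
    rw [hζdef]; field_simp
  set g : ℝ → ℝ := fun y => y ^ β / ((y - t) * Real.sqrt (y * (b - y))) with hgdef
  set F : ℕ → ℝ → ℝ := fun r u =>
    x^(r+1) * (u ^ ((β+1/2)-1) * (1-u) ^ ((((r:ℝ)+1/2))-1)) with hFdef
  -- Step 1 : substitution y = b u
  have step1 : (∫ y in (0:ℝ)..b, g y) = b * ∫ u in (0:ℝ)..1, g (b*u) := by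
    rw [intervalIntegral.integral_comp_mul_left g hb.ne', mul_zero, mul_one, smul_eq_mul,
      ← mul_assoc, mul_inv_cancel₀ hb.ne', one_mul]
  -- pointwise identity on (0,1)
  have hxζ : x*(1+ζ) = 1 := by rw [hxdef]; field_simp
  have key : ∀ u ∈ Set.Ioo (0:ℝ) 1, g (b*u) = b^(β-2) * ∑' r, F r u := by
    rintro u ⟨hu0, hu1⟩
    have h2 : (0:ℝ) < 1 - u := by linarith
    have e1 : ∀ r:ℕ, F r u
        = (x * u^((β+1/2)-1) * (1-u)^(-(1/2):ℝ)) * (x*(1-u))^r := by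
      intro r
      rw [hFdef]
      simp only []
      rw [pow_succ, show ((r:ℝ)+1/2-1) = (r:ℝ) + (-(1/2)) by ring,
        Real.rpow_add h2, Real.rpow_natCast, mul_pow]
      ring
    have hq1 : x*(1-u) < 1 := by nlinarith
    have htsum : ∑' r : ℕ, F r u
        = (x * u^((β+1/2)-1) * (1-u)^(-(1/2):ℝ)) * (x*(u+ζ))⁻¹ := by
      rw [tsum_congr e1, tsum_mul_left, tsum_geometric_of_lt_one (by positivity) hq1,
        show 1 - x*(1-u) = x*(u+ζ) by linear_combination -hxζ]
    rw [htsum, hgdef]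
    simp only []
    have e2 : (b*u)^β = b^β * u^β := Real.mul_rpow hb.le hu0.le
    have e3 : b*u - t = b*(u+ζ) := by linear_combination -hbζ
    have e4 : Real.sqrt (b*u*(b - b*u)) = b * Real.sqrt (u*(1-u)) := by
      rw [show b*u*(b-b*u) = b^2*(u*(1-u)) by ring, Real.sqrt_mul (sq_nonneg b),
        Real.sqrt_sq hb.le]
    have e5 : Real.sqrt (u*(1-u)) = u^((1:ℝ)/2) * (1-u)^((1:ℝ)/2) := by
      rw [Real.sqrt_mul hu0.le, Real.sqrt_eq_rpow, Real.sqrt_eq_rpow]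
    have r1 : b^β = b^(β-2) * b^(2:ℕ) := by
      rw [← Real.rpow_natCast b 2, ← Real.rpow_add hb]
      congr 1; push_cast; ring
    have r2 : u^β = u^((β+1/2)-1) * u^((1:ℝ)/2) := by
      rw [← Real.rpow_add hu0]; congr 1; ring
    have r3 : (1-u)^(-(1/2):ℝ) = ((1-u)^((1:ℝ)/2))⁻¹ := by
      rw [← Real.rpow_neg h2.le]
    have p1 : (0:ℝ) < u^((1:ℝ)/2) := Real.rpow_pos_of_pos hu0 _
    have p2 : (0:ℝ) < (1-u)^((1:ℝ)/2) := Real.rpow_pos_of_pos h2 _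
    have p3 : (0:ℝ) < u + ζ := by linarith
    rw [e2, e3, e4, e5, r1, r2, r3]
    field_simp
  -- interchange
  have hInt : ∀ r : ℕ, Integrable (F r) (volume.restrict (Set.Ioo (0:ℝ) 1)) := by
    intro r
    exact ((beta_integrableOn (by linarith : (0:ℝ) < β+1/2)
      (by positivity : (0:ℝ) < (r:ℝ)+1/2)).const_mul _)
  have hval : ∀ r : ℕ, (∫ u in Set.Ioo (0:ℝ) 1, F r u)
      = x^(r+1) * (Real.Gamma (β+1/2) * Real.Gamma ((r:ℝ)+1/2)
          / Real.Gamma ((β+1/2)+((r:ℝ)+1/2))) := by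
    intro r
    rw [hFdef]
    rw [MeasureTheory.integral_const_mul]
    rw [beta_Ioo (by linarith) (by positivity)]
  have hnorm : ∀ r : ℕ, (∫ u in Set.Ioo (0:ℝ) 1, ‖F r u‖)
      = ∫ u in Set.Ioo (0:ℝ) 1, F r u := by
    intro r
    apply MeasureTheory.integral_congr_ae
    rw [Filter.eventuallyEq_iff_exists_mem]
    refine ⟨Set.Ioo 0 1, (ae_restrict_iff' measurableSet_Ioo).2
      (Filter.Eventually.of_forall fun u hu => hu), fun u hu => ?_⟩
    have h1 : (0:ℝ) < u := hu.1
    have h2 : (0:ℝ) < 1 - u := by linarith [hu.2]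
    simp only []
    rw [Real.norm_eq_abs, abs_of_nonneg]
    rw [hFdef]
    positivity
  have hSum : Summable (fun r : ℕ => ∫ u in Set.Ioo (0:ℝ) 1, ‖F r u‖) := by
    set C : ℝ := ∫ u in Set.Ioo (0:ℝ) 1, u^((β+1/2)-1)*(1-u)^(((1:ℝ)/2)-1) with hCdef
    have hle : ∀ r : ℕ, (∫ u in Set.Ioo (0:ℝ) 1, ‖F r u‖) ≤ x^(r+1) * C := by
      intro r
      rw [hnorm r, hFdef]
      simp only []
      rw [MeasureTheory.integral_const_mul]
      have hbnd : (∫ u in Set.Ioo (0:ℝ) 1, u^((β+1/2)-1)*(1-u)^(((r:ℝ)+1/2)-1)) ≤ C := by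
        apply MeasureTheory.setIntegral_mono_on
          (beta_integrableOn (by linarith) (by positivity))
          (beta_integrableOn (by linarith) (by norm_num))
          measurableSet_Ioo
        rintro u ⟨hu0, hu1⟩
        have h2 : (0:ℝ) < 1 - u := by linarith
        have hexp : ((1:ℝ)/2)-1 ≤ ((r:ℝ)+1/2)-1 := by
          have : (0:ℝ) ≤ (r:ℝ) := Nat.cast_nonneg r
          linarith
        exact mul_le_mul_of_nonneg_left
          (Real.rpow_le_rpow_of_exponent_ge h2 (by linarith) hexp)
          (Real.rpow_nonneg hu0.le _)
      exact mul_le_mul_of_nonneg_left hbnd (pow_nonneg hx0.le _)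
    apply Summable.of_nonneg_of_le
      (fun r => MeasureTheory.integral_nonneg fun u => norm_nonneg _) hle
    exact ((summable_geometric_of_lt_one hx0.le hx1).mul_left (x*C)).congr
      (fun r => by ring)
  have step2 : (∫ u in Set.Ioo (0:ℝ) 1, ∑' r, F r u)
      = ∑' r, ∫ u in Set.Ioo (0:ℝ) 1, F r u :=
    (MeasureTheory.integral_tsum_of_summable_integral_norm hInt hSum).symm
  -- evaluate the sum
  have step3 : (∑' r : ℕ, ∫ u in Set.Ioo (0:ℝ) 1, F r u)
      = (x * Real.Gamma (β+1/2) * Real.sqrt π / Real.Gamma (β+1))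
          * F21 1 (1/2) (β+1) x := by
    simp only [F21]
    rw [← tsum_mul_left]
    apply tsum_congr
    intro r
    rw [hval r]
    have gP1 : Real.Gamma ((r:ℝ)+1/2)
        = Real.Gamma (1/2) * (ascPochhammer ℝ r).eval (1/2) := by
      rw [show (r:ℝ)+1/2 = 1/2 + (r:ℕ) by push_cast; ring]
      exact Gamma_ascPoch (by norm_num) r
    have gP2 : Real.Gamma ((β+1/2)+((r:ℝ)+1/2))
        = Real.Gamma (β+1) * (ascPochhammer ℝ r).eval (β+1) := by
      rw [show (β+1/2)+((r:ℝ)+1/2) = (β+1) + (r:ℕ) by push_cast; ring]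
      exact Gamma_ascPoch (by linarith) r
    have gP3 : (ascPochhammer ℝ r).eval (1:ℝ) = (r.factorial : ℝ) := by
      exact_mod_cast ascPochhammer_eval_one ℝ r
    have hp : (0:ℝ) < (ascPochhammer ℝ r).eval (β+1) :=
      ascPochhammer_pos r (β+1) (by linarith)
    have hf : ((r.factorial : ℝ)) ≠ 0 := Nat.cast_ne_zero.2 r.factorial_ne_zero
    have hΓ : Real.Gamma (β+1) ≠ 0 := (Real.Gamma_pos_of_pos (by linarith)).ne'
    rw [gP1, gP2, gP3, Real.Gamma_one_half_eq]
    field_simp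
    ring
  -- assemble
  have step4 : (∫ u in (0:ℝ)..1, g (b*u))
      = b^(β-2) * ((x * Real.Gamma (β+1/2) * Real.sqrt π / Real.Gamma (β+1))
          * F21 1 (1/2) (β+1) x) := by
    rw [intervalIntegral.integral_of_le zero_le_one,
      MeasureTheory.integral_Ioc_eq_integral_Ioo, ← step3, ← step2,
      ← MeasureTheory.integral_const_mul]
    exact MeasureTheory.setIntegral_congr_fun measurableSet_Ioo key
  have hbb : Real.sqrt b * Real.sqrt b = b := Real.mul_self_sqrt hb.le
  have hss : Real.sqrt (1+ζ) * Real.sqrt (1+ζ) = 1+ζ := Real.mul_self_sqrt h1ζ.le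
  have hPP : Real.sqrt π * Real.sqrt π = π := Real.mul_self_sqrt pi_nonneg
  have hst : Real.sqrt (-t) = Real.sqrt b * Real.sqrt ζ := by
    rw [show -t = b*ζ from hbζ.symm, Real.sqrt_mul hb.le]
  have hst2 : Real.sqrt (b-t) = Real.sqrt b * Real.sqrt (1+ζ) := by
    rw [show b - t = b*(1+ζ) from by linear_combination -hbζ, Real.sqrt_mul hb.le]
  have s1 : Real.sqrt (-t) * Real.sqrt (b-t)
      = b * (Real.sqrt ζ * Real.sqrt (1+ζ)) := by
    rw [hst, hst2]
    linear_combination (Real.sqrt ζ * Real.sqrt (1+ζ)) * hbb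
  have hq : Real.sqrt (ζ/(1+ζ)) = Real.sqrt ζ / Real.sqrt (1+ζ) := Real.sqrt_div hζ.le _
  have hΓ1 : Real.Gamma (β+1) = β * Real.Gamma β := Real.Gamma_add_one hβ.ne'
  have hD : (0:ℝ) < (2:ℝ)^(1-2*β) := Real.rpow_pos_of_pos two_pos _
  have e2 : (2:ℝ)^(2:ℝ) = 4 := by
    rw [show (2:ℝ) = ((2:ℕ):ℝ) from by norm_num, Real.rpow_natCast]
    norm_num
  have h42 : (4:ℝ)^β * (2:ℝ)^(1-2*β) = 2 := by
    rw [show (4:ℝ)^β = (2:ℝ)^((2:ℝ)*β) from by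
        rw [← e2, ← Real.rpow_mul (by norm_num : (0:ℝ) ≤ 2)],
      ← Real.rpow_add two_pos, show (2:ℝ)*β+(1-2*β) = 1 by ring, Real.rpow_one]
  have h4 : (4:ℝ)^β = 2/(2:ℝ)^(1-2*β) := by
    rw [eq_div_iff hD.ne']
    exact h42
  have hΓ2 : Real.Gamma (2*β)
      = Real.Gamma β * Real.Gamma (β+1/2) / ((2:ℝ)^(1-2*β) * Real.sqrt π) := by
    rw [eq_div_iff (by positivity)]
    linear_combination -Real.Gamma_mul_Gamma_add_half β
  have hbB : b^β = b^(β-2) * (b*b) := by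
    rw [show b*b = b^(2:ℕ) by ring, ← Real.rpow_natCast b 2, ← Real.rpow_add hb]
    congr 1; push_cast; ring
  have hx' : x = 1/(Real.sqrt (1+ζ)*Real.sqrt (1+ζ)) := by rw [hss]
  have hΓβ : Real.Gamma β ≠ 0 := (Real.Gamma_pos_of_pos hβ).ne'
  have hsπ : Real.sqrt π ≠ 0 := (Real.sqrt_pos.2 pi_pos).ne'
  have hs1 : Real.sqrt (1+ζ) ≠ 0 := (Real.sqrt_pos.2 h1ζ).ne'
  rw [step1, step4, s1, hq, hΓ2, hΓ1, hbB, h4, hx',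
    show (2:ℝ)*π = 2*(Real.sqrt π*Real.sqrt π) from by rw [hPP]]
  field_simp
end

section
/- Let n ≥ 1 be an integer, set β = n + 1/2, and let L_s be as in the context. Then for every real x with 0 < x < 1: ₂F₁(1, 1/2; β+1; x) = L_β · (x−1)^n / x^{β+1/2} · ( √x · ln((1+√x)/(1−√x)) + ∑_{r=1}^{n} (1/L_{r−1/2}) (x/(x−1))^r ). -/
open Real

/-- `L_s = s · 4^s · Γ(s)² / (2π Γ(2s))` for `s > 0`. -/
noncomputable def Lcoef (s : ℝ) : ℝ :=
  s * (4:ℝ) ^ s * Real.Gamma s ^ 2 / (2 * π * Real.Gamma (2 * s))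

/-- auxiliary: terms of `₂F₁(1, 1/2; c; x)`. -/
noncomputable def pterm (c x : ℝ) (r : ℕ) : ℝ :=
  (ascPochhammer ℝ r).eval (1/2 : ℝ) * x ^ r / (ascPochhammer ℝ r).eval c

lemma Lcoef_pos {s : ℝ} (hs : 0 < s) : 0 < Lcoef s := by
  unfold Lcoef
  have h1 : 0 < Real.Gamma s := Real.Gamma_pos_of_pos hs
  have h2 : 0 < Real.Gamma (2 * s) := Real.Gamma_pos_of_pos (by linarith)
  have h3 : (0:ℝ) < (4:ℝ) ^ s := Real.rpow_pos_of_pos (by norm_num) s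
  have := Real.pi_pos
  positivity

lemma Lcoef_half : Lcoef (1/2) = 1/2 := by
  unfold Lcoef
  have h4 : (4:ℝ) ^ ((1:ℝ)/2) = 2 := by
    rw [← Real.sqrt_eq_rpow, show (4:ℝ) = 2^2 by norm_num, Real.sqrt_sq (by norm_num)]
  rw [show (2:ℝ) * (1/2) = 1 by norm_num, Real.Gamma_one, Real.Gamma_one_half_eq, h4,
    sq_sqrt (le_of_lt Real.pi_pos)]
  have hπ : (π:ℝ) ≠ 0 := ne_of_gt Real.pi_pos
  field_simp

lemma Lcoef_succ {s : ℝ} (hs : 0 < s) : Lcoef (s + 1) = Lcoef s * (2 * (s + 1) / (2 * s + 1)) := by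
  unfold Lcoef
  have hG : Real.Gamma (s + 1) = s * Real.Gamma s := Real.Gamma_add_one (ne_of_gt hs)
  have h2s : Real.Gamma (2 * (s + 1)) = (2 * s + 1) * (2 * s) * Real.Gamma (2 * s) := by
    have e1 : 2 * (s + 1) = (2 * s + 1) + 1 := by ring
    have e2 : Real.Gamma (2 * s + 1) = (2 * s) * Real.Gamma (2 * s) :=
      Real.Gamma_add_one (by positivity)
    rw [e1, Real.Gamma_add_one (by positivity), e2]; ring
  have h4 : (4:ℝ) ^ (s + 1) = (4:ℝ) ^ s * 4 := by
    rw [Real.rpow_add_one (by norm_num) s]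
  have hΓpos : 0 < Real.Gamma (2 * s) := Real.Gamma_pos_of_pos (by linarith)
  have hπ := Real.pi_pos
  rw [hG, h2s, h4]
  field_simp
  ring

lemma poch_pos {c : ℝ} (hc : 0 < c) (r : ℕ) : 0 < (ascPochhammer ℝ r).eval c :=
  ascPochhammer_pos r c hc

lemma poch_three_half (r : ℕ) :
    (ascPochhammer ℝ r).eval (3/2 : ℝ) = (2 * r + 1) * (ascPochhammer ℝ r).eval (1/2 : ℝ) := by
  induction r with
  | zero => simp
  | succ n ih =>
    rw [ascPochhammer_succ_eval, ascPochhammer_succ_eval, ih]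
    push_cast
    ring

lemma pterm_zero (c x : ℝ) : pterm c x 0 = 1 := by simp [pterm]

/-- contiguous relation, termwise -/
lemma pterm_rec {c : ℝ} (hc : 0 < c) (hc2 : c ≠ 1/2) {x : ℝ} (hx : x ≠ 0) (k : ℕ) :
    pterm (c + 1) x k =
      c / (c - 1/2) * pterm c x k - c / ((c - 1/2) * x) * pterm c x (k + 1) := by
  have hQ : (0:ℝ) < (ascPochhammer ℝ k).eval c := poch_pos hc k
  have hQ1 : (0:ℝ) < (ascPochhammer ℝ k).eval (c + 1) := poch_pos (by linarith) k
  have hck : (0:ℝ) < c + k := by positivity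
  have hcomp : c * (ascPochhammer ℝ k).eval (c + 1) = (ascPochhammer ℝ k).eval c * (c + k) := by
    have h1 : (ascPochhammer ℝ (k + 1)).eval c = (ascPochhammer ℝ k).eval c * (c + k) :=
      ascPochhammer_succ_eval k c
    have h2 : (ascPochhammer ℝ (k + 1)).eval c = c * (ascPochhammer ℝ k).eval (c + 1) := by
      rw [ascPochhammer_succ_left, Polynomial.eval_mul, Polynomial.eval_X, Polynomial.eval_comp,
        Polynomial.eval_add, Polynomial.eval_X, Polynomial.eval_one]
    rw [← h1, h2]
  have hc0 : c ≠ 0 := ne_of_gt hc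
  have hQ1eq : (ascPochhammer ℝ k).eval (c + 1) =
      (ascPochhammer ℝ k).eval c * (c + k) / c := by
    field_simp
    linarith [hcomp]
  unfold pterm
  rw [ascPochhammer_succ_eval, ascPochhammer_succ_eval, hQ1eq]
  have hc' : c - 1/2 ≠ 0 := fun h => hc2 (by linarith [sub_eq_zero.mp h])
  rw [pow_succ]
  rw [div_eq_iff (by positivity)]
  set d := c - 1/2 with hd
  set e := c + (k:ℝ) with he
  have hd0 : d ≠ 0 := hc'
  have he0 : e ≠ 0 := ne_of_gt hck
  field_simp
  rw [hd, he]
  ring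

example : True := trivial

/-- base case: `₂F₁(1,1/2;3/2;x)` series. -/
lemma base_hasSum {x : ℝ} (hx0 : 0 < x) (hx1 : x < 1) :
    HasSum (pterm (3/2) x)
      ((Real.log (1 + Real.sqrt x) - Real.log (1 - Real.sqrt x)) / (2 * Real.sqrt x)) := by
  have hy0 : 0 < Real.sqrt x := Real.sqrt_pos.mpr hx0
  have hy1 : Real.sqrt x < 1 := by
    rw [show (1:ℝ) = Real.sqrt 1 by simp]
    exact Real.sqrt_lt_sqrt (le_of_lt hx0) hx1
  have h := hasSum_log_sub_log_of_abs_lt_one (x := Real.sqrt x)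
    (by rw [abs_of_pos hy0]; exact hy1)
  have h2 := h.mul_left (1 / (2 * Real.sqrt x))
  convert h2 using 1
  · rfl
  swap
  · ring
  funext k
  have hyx : Real.sqrt x ^ (2 * k + 1) = x ^ k * Real.sqrt x := by
    rw [pow_succ, pow_mul, Real.sq_sqrt (le_of_lt hx0)]
  rw [hyx]
  unfold pterm
  rw [poch_three_half]
  have hP : (0:ℝ) < (ascPochhammer ℝ k).eval (1/2 : ℝ) := poch_pos (by norm_num) k
  have h2k : (0:ℝ) < 2 * (k:ℝ) + 1 := by positivity
  field_simp

/-- induction step at the level of sums -/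
lemma step_hasSum {c x s : ℝ} (hc : 0 < c) (hc2 : c ≠ 1/2) (hx : x ≠ 0)
    (hs : HasSum (pterm c x) s) :
    HasSum (pterm (c + 1) x) (c * (1 - (1 - x) * s) / ((c - 1/2) * x)) := by
  have h1 : HasSum (fun k => pterm c x (k + 1)) (s - 1) := by
    have := (hasSum_nat_add_iff' (f := pterm c x) (g := s) 1).mpr hs
    simpa [pterm_zero] using this
  have h2 := (hs.mul_left (c / (c - 1/2))).sub (h1.mul_left (c / ((c - 1/2) * x)))
  have hc' : c - 1/2 ≠ 0 := fun h => hc2 (by linarith [sub_eq_zero.mp h])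
  have hfun : (fun k => c / (c - 1/2) * pterm c x k - c / ((c - 1/2) * x) * pterm c x (k + 1))
      = pterm (c + 1) x := by
    funext k
    rw [pterm_rec hc hc2 hx k]
  rw [hfun] at h2
  convert h2 using 1
  · rfl
  set d := c - 1/2 with hd
  have hd0 : d ≠ 0 := hc'
  field_simp
  ring

lemma alg_step (a K T S x : ℝ) (n : ℕ) (ha : a ≠ 0) (hK : K ≠ 0) (hx : x ≠ 0) (hw : x - 1 ≠ 0) :
    K * (2 * (a + 1/2) / (2 * a)) * (x - 1) ^ (n+1) / x ^ (n+1+1) *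
      (T + (S + 1/K * (x ^ (n+1) / (x - 1) ^ (n+1))))
    = (a + 1/2) * (1 - (1 - x) * (K * (x - 1) ^ n / x ^ (n+1) * (T + S))) / (a * x) := by
  have hw' : (x - 1) ^ (n+1) ≠ 0 := pow_ne_zero _ hw
  have hx' : x ^ (n+1) ≠ 0 := pow_ne_zero _ hx
  field_simp
  ring

/-- the closed form -/
noncomputable def RHSexpr (n : ℕ) (x : ℝ) : ℝ :=
  Lcoef ((n:ℝ) + 1/2) * (x - 1) ^ n / x ^ (n+1) *
    (Real.sqrt x * Real.log ((1 + Real.sqrt x) / (1 - Real.sqrt x)) +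
      ∑ r ∈ Finset.Icc 1 n, (1 / Lcoef ((r : ℝ) - 1/2)) * (x / (x - 1)) ^ r)

lemma rhs_rec (n : ℕ) {x : ℝ} (hx0 : 0 < x) (hx1 : x < 1) :
    RHSexpr (n+1) x =
      ((n:ℝ) + 3/2) * (1 - (1 - x) * RHSexpr n x) / (((((n:ℝ) + 3/2)) - 1/2) * x) := by
  have hK : Lcoef ((n:ℝ) + 1/2) ≠ 0 := ne_of_gt (Lcoef_pos (by positivity))
  have hx : x ≠ 0 := ne_of_gt hx0
  have hw : x - 1 ≠ 0 := ne_of_lt (by linarith)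
  unfold RHSexpr
  rw [Finset.sum_Icc_succ_top (Nat.le_add_left 1 n)]
  have hc1 : ((n+1:ℕ):ℝ) + 1/2 = ((n:ℝ) + 1/2) + 1 := by push_cast; ring
  have hc2 : ((n+1:ℕ):ℝ) - 1/2 = (n:ℝ) + 1/2 := by push_cast; ring
  rw [hc1, hc2, Lcoef_succ (by positivity)]
  rw [div_pow]
  rw [show 2 * ((n:ℝ) + 1/2 + 1) = 2 * (((n:ℝ) + 1) + 1/2) by ring,
    show 2 * ((n:ℝ) + 1/2) + 1 = 2 * ((n:ℝ) + 1) by ring,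
    show (n:ℝ) + 3/2 = ((n:ℝ) + 1) + 1/2 by ring,
    show ((n:ℝ) + 1) + 1/2 - 1/2 = (n:ℝ) + 1 by ring]
  exact alg_step ((n:ℝ) + 1) _ _ _ x n (by positivity)
    (ne_of_gt (Lcoef_pos (by positivity))) hx hw

lemma main_hasSum {x : ℝ} (hx0 : 0 < x) (hx1 : x < 1) :
    ∀ n : ℕ, HasSum (pterm ((n:ℝ) + 3/2) x) (RHSexpr n x) := by
  intro n
  induction n with
  | zero =>
    have h := base_hasSum hx0 hx1
    have hy0 : 0 < Real.sqrt x := Real.sqrt_pos.mpr hx0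
    have hy1 : Real.sqrt x < 1 := by
      rw [show (1:ℝ) = Real.sqrt 1 by simp]
      exact Real.sqrt_lt_sqrt (le_of_lt hx0) hx1
    have hval : RHSexpr 0 x
        = (Real.log (1 + Real.sqrt x) - Real.log (1 - Real.sqrt x)) / (2 * Real.sqrt x) := by
      unfold RHSexpr
      rw [show ((0:ℕ):ℝ) + 1/2 = 1/2 by norm_num, Lcoef_half]
      rw [Real.log_div (by positivity) (by intro h; have := sub_eq_zero.mp h; linarith)]
      simp only [pow_zero, pow_one, show Finset.Icc 1 0 = ∅ by decide, Finset.sum_empty, add_zero]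
      field_simp
      linear_combination ((Real.log (1 + Real.sqrt x) - Real.log (1 - Real.sqrt x))) *
        Real.mul_self_sqrt (le_of_lt hx0)
    rw [show ((0:ℕ):ℝ) + 3/2 = 3/2 by norm_num, hval]
    exact h
  | succ n ih =>
    have hc : (0:ℝ) < (n:ℝ) + 3/2 := by positivity
    have hc2 : (n:ℝ) + 3/2 ≠ 1/2 := by
      have : (0:ℝ) ≤ (n:ℝ) := Nat.cast_nonneg n
      intro h; linarith
    have h := step_hasSum hc hc2 (ne_of_gt hx0) ih
    rw [rhs_rec n hx0 hx1]
    have hcast : ((n+1:ℕ):ℝ) + 3/2 = ((n:ℝ) + 3/2) + 1 := by push_cast; ring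
    rw [hcast]
    convert h using 2

/-- For an integer `n ≥ 1`, `β = n + 1/2` and `0 < x < 1`,
`₂F₁(1,1/2;β+1;x) = L_β (x−1)^n / x^{β+1/2} ·
  (√x ln((1+√x)/(1−√x)) + ∑_{r=1}^n (1/L_{r−1/2}) (x/(x−1))^r)`. -/
theorem hypergeom_halfinteger_closed_form
    (n : ℕ) (hn : 1 ≤ n) (β : ℝ) (hβ : β = (n : ℝ) + 1/2)
    (x : ℝ) (hx0 : 0 < x) (hx1 : x < 1) :
    F21 1 (1/2) (β + 1) x =
      Lcoef β * (x - 1) ^ n / x ^ (β + 1/2) *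
        (Real.sqrt x * Real.log ((1 + Real.sqrt x) / (1 - Real.sqrt x)) +
          ∑ r ∈ Finset.Icc 1 n, (1 / Lcoef ((r : ℝ) - 1/2)) * (x / (x - 1)) ^ r) := by
  have hc : β + 1 = (n:ℝ) + 3/2 := by rw [hβ]; ring
  have hF : F21 1 (1/2) (β + 1) x = ∑' r : ℕ, pterm ((n:ℝ) + 3/2) x r := by
    unfold F21
    rw [hc]
    apply tsum_congr
    intro r
    unfold pterm
    rw [ascPochhammer_eval_one]
    have h2 : (r.factorial : ℝ) ≠ 0 := by positivity
    rw [mul_comm ((ascPochhammer ℝ r).eval ((n:ℝ) + 3/2)) (r.factorial:ℝ),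
      mul_div_mul_left _ _ h2]
    ring
  rw [hF, (main_hasSum hx0 hx1 n).tsum_eq]
  unfold RHSexpr
  rw [hβ]
  rw [show (n:ℝ) + 1/2 + 1/2 = ((n+1:ℕ):ℝ) by push_cast; ring, Real.rpow_natCast]
end

section
/- Fix β > 1/2 and let λ_N be as in the context. Then lim_{N→∞} λ_N = 0; that is, the smallest eigenvalue of the infinite Hankel matrix associated with the weight exp(−x^β) is zero. -/
open MeasureTheory Real Filter Topology

open Polynomial Set Matrix

private lemma cheb_natDegree_le (n : ℕ) : (Chebyshev.T ℝ (n:ℤ)).natDegree ≤ n := by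
  induction n using Nat.strong_induction_on with
  | _ n ih =>
    match n with
    | 0 => simp [Chebyshev.T_zero]
    | 1 => simp [Chebyshev.T_one]
    | (m+2) =>
      have h1 := ih (m+1) (by omega)
      have h0 := ih m (by omega)
      have : ((m:ℤ)+2) = ((m+2:ℕ):ℤ) := by push_cast; ring
      rw [← this, Chebyshev.T_add_two]
      refine le_trans (natDegree_sub_le _ _) ?_
      have e1 : ((m:ℤ)+1) = ((m+1:ℕ):ℤ) := by push_cast; ring
      have hX : (2 * X * Chebyshev.T ℝ ((m:ℤ)+1)).natDegree ≤ m + 2 := by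
        refine le_trans (natDegree_mul_le) ?_
        have : (2 * X : ℝ[X]).natDegree ≤ 1 := by
          refine le_trans (natDegree_mul_le) ?_
          simp
        rw [e1]
        omega
      have hT : (Chebyshev.T ℝ (m:ℤ)).natDegree ≤ m + 2 := le_trans h0 (by omega)
      omega

private lemma cheb_eval_cosh (n : ℕ) (t : ℝ) :
    (Chebyshev.T ℝ (n:ℤ)).eval (Real.cosh t) = Real.cosh (n * t) := by
  induction n using Nat.strong_induction_on with
  | _ n ih =>
    match n with
    | 0 => simp [Chebyshev.T_zero]
    | 1 => simp [Chebyshev.T_one]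
    | (m+2) =>
      have h1 := ih (m+1) (by omega)
      have h0 := ih m (by omega)
      have e2 : ((m+2:ℕ):ℤ) = (m:ℤ)+2 := by push_cast; ring
      have e1 : ((m+1:ℕ):ℤ) = (m:ℤ)+1 := by push_cast; ring
      rw [e2, Chebyshev.T_add_two]
      simp only [eval_sub, eval_mul, eval_ofNat, eval_X, ← e1, h1, h0]
      have ha : ((m+2:ℕ):ℝ) * t = ((m+1:ℕ):ℝ)*t + t := by push_cast; ring
      have hb : ((m:ℕ):ℝ) * t = ((m+1:ℕ):ℝ)*t - t := by push_cast; ring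
      rw [ha, hb, Real.cosh_add, Real.cosh_sub]
      ring

private lemma cheb_eval_neg (n : ℕ) (y : ℝ) :
    (Chebyshev.T ℝ (n:ℤ)).eval (-y) = (-1)^n * (Chebyshev.T ℝ (n:ℤ)).eval y := by
  induction n using Nat.strong_induction_on with
  | _ n ih =>
    match n with
    | 0 => simp [Chebyshev.T_zero]
    | 1 => simp [Chebyshev.T_one]
    | (m+2) =>
      have h1 := ih (m+1) (by omega)
      have h0 := ih m (by omega)
      have e2 : ((m+2:ℕ):ℤ) = (m:ℤ)+2 := by push_cast; ring
      have e1 : ((m+1:ℕ):ℤ) = (m:ℤ)+1 := by push_cast; ring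
      rw [e2, Chebyshev.T_add_two]
      simp only [eval_sub, eval_mul, eval_ofNat, eval_X, ← e1, h1, h0]
      ring

private lemma cheb_abs_le (n : ℕ) {y : ℝ} (h : |y| ≤ 1) : |(Chebyshev.T ℝ (n:ℤ)).eval y| ≤ 1 := by
  obtain ⟨h1, h2⟩ := abs_le.mp h
  have : Real.cos (Real.arccos y) = y := Real.cos_arccos h1 h2
  rw [← this, Polynomial.Chebyshev.T_real_cos]
  exact Real.abs_cos_le_one _

private lemma arcosh_exists {a : ℝ} (ha : 1 ≤ a) :
    ∃ t, 0 ≤ t ∧ Real.cosh t = a ∧ Real.exp t = a + Real.sqrt (a^2-1) := by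
  have h1 : (0:ℝ) ≤ a^2 - 1 := by nlinarith
  set z := a + Real.sqrt (a^2-1) with hz
  have hs := Real.sq_sqrt h1
  have hsn := Real.sqrt_nonneg (a^2-1)
  have hz1 : 1 ≤ z := by nlinarith
  have hz0 : 0 < z := by linarith
  refine ⟨Real.log z, Real.log_nonneg hz1, ?_, Real.exp_log hz0⟩
  rw [Real.cosh_eq, Real.exp_log hz0, Real.exp_neg, Real.exp_log hz0]
  have hinv : z⁻¹ = a - Real.sqrt (a^2-1) := by
    have hmul : z * (a - Real.sqrt (a^2-1)) = 1 := by
      rw [hz]; nlinarith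
    field_simp
    nlinarith
  rw [hinv]; ring

private lemma one_add_sq_half_le_cosh {s : ℝ} (hs : 0 ≤ s) : 1 + s^2/2 ≤ Real.cosh s := by
  have h : Real.cosh s = 1 + 2 * Real.sinh (s/2)^2 := by
    have := Real.cosh_two_mul (s/2)
    have h2 := Real.cosh_sq' (s/2)
    rw [show 2*(s/2) = s by ring] at this
    rw [this, h2]; ring
  rcases eq_or_lt_of_le hs with rfl | hs'
  · simp [h]
  · have : s/2 < Real.sinh (s/2) := Real.self_lt_sinh_iff.mpr (by linarith)
    nlinarith [this]



-- upper bound for tail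
private lemma cheb_upper (n : ℕ) {u : ℝ} (hu : 0 ≤ u) :
    ((Chebyshev.T ℝ (n:ℤ)).eval (1+u))^2 ≤ Real.exp (2*n*Real.sqrt (2*u)) := by
  obtain ⟨t, ht0, hct, -⟩ := arcosh_exists (by linarith : (1:ℝ) ≤ 1+u)
  have hts : t ≤ Real.sqrt (2*u) := by
    have h1 : Real.cosh t ≤ Real.cosh (Real.sqrt (2*u)) := by
      rw [hct]
      have := one_add_sq_half_le_cosh (Real.sqrt_nonneg (2*u))
      rw [Real.sq_sqrt (by linarith : (0:ℝ) ≤ 2*u)] at this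
      linarith
    have := Real.cosh_le_cosh.mp h1
    rwa [abs_of_nonneg ht0, abs_of_nonneg (Real.sqrt_nonneg _)] at this
  rw [← hct, cheb_eval_cosh]
  have hch : Real.cosh ((n:ℝ)*t) ≤ Real.exp ((n:ℝ)*t) := by
    rw [Real.cosh_eq]
    have := Real.exp_pos (-((n:ℝ)*t))
    have hmon : Real.exp (-((n:ℝ)*t)) ≤ Real.exp ((n:ℝ)*t) := by
      apply Real.exp_le_exp.mpr
      have : 0 ≤ (n:ℝ)*t := by positivity
      linarith
    linarith
  have hpos : (0:ℝ) < Real.cosh ((n:ℝ)*t) := Real.cosh_pos _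
  calc Real.cosh ((n:ℝ)*t)^2 ≤ Real.exp ((n:ℝ)*t)^2 := by nlinarith
    _ = Real.exp (2*n*t) := by rw [sq, ← Real.exp_add]; congr 1; ring
    _ ≤ Real.exp (2*n*Real.sqrt (2*u)) := by
        apply Real.exp_le_exp.mpr
        have : (0:ℝ) ≤ 2*(n:ℝ) := by positivity
        nlinarith [hts]

-- lower bound at -1
private lemma cheb_lower (n : ℕ) {u : ℝ} (hu : 0 ≤ u) (hub : Real.sqrt (2*u) ≤ 1) :
    Real.exp ((n:ℝ) * Real.sqrt (2*u) / 2) / 2 ≤ (Chebyshev.T ℝ (n:ℤ)).eval (1+u) := by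
  obtain ⟨t, ht0, hct, hexp⟩ := arcosh_exists (by linarith : (1:ℝ) ≤ 1+u)
  set a := Real.sqrt (2*u) with hadef
  have ha0 : 0 ≤ a := Real.sqrt_nonneg _
  have hsq : a^2 = 2*u := Real.sq_sqrt (by linarith)
  -- exp t = 1+u+sqrt((1+u)^2-1) ≥ 1 + a
  have hz : 1 + a ≤ Real.exp t := by
    rw [hexp]
    have : a ≤ Real.sqrt ((1+u)^2-1) := by
      apply Real.sqrt_le_sqrt
      nlinarith
    linarith
  -- exp(a/2) ≤ 1 + a
  have hea : Real.exp (a/2) ≤ 1 + a := by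
    have h1 : 1 - a/2 ≤ Real.exp (-(a/2)) := by
      have := Real.add_one_le_exp (-(a/2)); linarith
    have h2 : Real.exp (a/2) * Real.exp (-(a/2)) = 1 := by
      rw [← Real.exp_add]; simp
    nlinarith [Real.exp_pos (-(a/2)), Real.exp_pos (a/2)]
  rw [← hct, cheb_eval_cosh]
  have hcosh : Real.exp ((n:ℝ)*t) / 2 ≤ Real.cosh ((n:ℝ)*t) := by
    rw [Real.cosh_eq]
    have := (Real.exp_pos (-((n:ℝ)*t))).le
    linarith
  refine le_trans ?_ hcosh
  have key : Real.exp ((n:ℝ) * a / 2) ≤ Real.exp ((n:ℝ)*t) := by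
    have e1 : Real.exp ((n:ℝ) * a / 2) = (Real.exp (a/2))^n := by
      rw [← Real.exp_nat_mul]; congr 1; ring
    have e2 : Real.exp ((n:ℝ)*t) = (Real.exp t)^n := by
      rw [← Real.exp_nat_mul]
    rw [e1, e2]
    apply pow_le_pow_left₀ (Real.exp_pos _).le
    linarith
  linarith


private lemma integ_exp_mul (s b : ℝ) (hs : -1 < s) (hb : 0 < b) :
    IntegrableOn (fun t : ℝ => t ^ s * Real.exp (-(b*t))) (Set.Ioi 0) := by
  have h0 : (0:ℝ) < s + 1 := by linarith
  have hG : IntegrableOn (fun x : ℝ => Real.exp (-x) * x ^ s) (Set.Ioi 0) := by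
    have := Real.GammaIntegral_convergent h0
    simpa using this
  have hscale := (integrableOn_Ioi_comp_mul_left_iff
      (fun x : ℝ => Real.exp (-x) * x ^ s) 0 hb).mpr (by simpa using hG)
  -- hscale : IntegrableOn (fun x => exp (-(b*x)) * (b*x)^s) (Ioi 0)
  have h2 : IntegrableOn (fun x : ℝ => (b^s)⁻¹ * (Real.exp (-(b*x)) * (b*x) ^ s)) (Set.Ioi 0) :=
    hscale.const_mul _
  refine h2.congr_fun (fun x hx => ?_) measurableSet_Ioi
  have hx0 : (0:ℝ) < x := hx
  beta_reduce
  rw [Real.mul_rpow hb.le hx0.le]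
  have hbs : (0:ℝ) < b ^ s := Real.rpow_pos_of_pos hb s
  field_simp

private lemma integ_rpow_exp (β : ℝ) (hβ : 0 < β) (s b : ℝ) (hs : -1 < s) (hb : 0 < b) :
    IntegrableOn (fun x : ℝ => x ^ s * Real.exp (-(b * x ^ β))) (Set.Ioi 0) := by
  have ha : (-1:ℝ) < (s+1)/β - 1 := by
    have : 0 < (s+1)/β := div_pos (by linarith) hβ
    linarith
  have key := (integrableOn_Ioi_comp_rpow_iff'
      (fun t : ℝ => t ^ ((s+1)/β - 1) * Real.exp (-(b*t))) hβ.ne').mpr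
      (integ_exp_mul _ b ha hb)
  refine key.congr_fun (fun x hx => ?_) measurableSet_Ioi
  have hx0 : (0:ℝ) < x := hx
  have h1 : (x ^ β) ^ ((s+1)/β - 1) = x ^ (β * ((s+1)/β - 1)) := by
    rw [← Real.rpow_mul hx0.le]
  have h2 : β * ((s+1)/β - 1) = s + 1 - β := by field_simp
  beta_reduce
  rw [smul_eq_mul, h1, h2, ← mul_assoc, ← Real.rpow_add hx0]
  ring_nf

private lemma integ_pow_exp (β : ℝ) (hβ : 0 < β) (n : ℕ) :
    IntegrableOn (fun x : ℝ => x ^ n * Real.exp (-(x ^ β))) (Set.Ioi 0) := by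
  have := integ_rpow_exp β hβ (n:ℝ) 1 (lt_of_lt_of_le (by norm_num) (Nat.cast_nonneg n)) one_pos
  refine this.congr_fun (fun x hx => ?_) measurableSet_Ioi
  beta_reduce
  rw [Real.rpow_natCast]
  norm_num

private lemma integ_exp_half (β : ℝ) (hβ : 0 < β) :
    IntegrableOn (fun x : ℝ => Real.exp (-(x ^ β)/2)) (Set.Ioi 0) := by
  have := integ_rpow_exp β hβ 0 (1/2) (by norm_num) (by norm_num)
  refine this.congr_fun (fun x hx => ?_) measurableSet_Ioi
  have hx0 : (0:ℝ) < x := hx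
  beta_reduce
  rw [Real.rpow_zero, one_mul]
  congr 1
  ring


private lemma hasEig_toLin' {n : ℕ} {M : Matrix (Fin n) (Fin n) ℝ} (hM : M.IsHermitian)
    (i : Fin n) : Module.End.HasEigenvalue (Matrix.toLin' M) (hM.eigenvalues i) := by
  have hvec := hM.mulVec_eigenvectorBasis i
  apply Module.End.hasEigenvalue_of_hasEigenvector (x := (WithLp.equiv 2 _) (hM.eigenvectorBasis i))
  constructor
  · rw [Module.End.mem_eigenspace_iff, Matrix.toLin'_apply]; exact hvec
  · intro h
    apply hM.eigenvectorBasis.orthonormal.ne_zero i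
    have : hM.eigenvectorBasis i = (WithLp.equiv 2 _).symm 0 := by
      apply (WithLp.equiv 2 _).injective
      simpa using h
    simpa using this

private lemma rayleigh_lower {n : ℕ} {M : Matrix (Fin n) (Fin n) ℝ} (hM : M.IsHermitian)
    {lb : ℝ} (hlb : ∀ i, lb ≤ hM.eigenvalues i) (v : Fin n → ℝ) :
    lb * dotProduct v v ≤ dotProduct v (M *ᵥ v) := by
  classical
  set U : Matrix (Fin n) (Fin n) ℝ := (hM.eigenvectorUnitary : Matrix (Fin n) (Fin n) ℝ) with hUdef
  have hUU : U * star U = 1 := Matrix.mem_unitaryGroup_iff.mp hM.eigenvectorUnitary.2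
  have hUU' : star U * U = 1 := Matrix.mem_unitaryGroup_iff'.mp hM.eigenvectorUnitary.2
  set w : Fin n → ℝ := (star U) *ᵥ v with hw
  set d : Fin n → ℝ := hM.eigenvalues with hd
  have hspec : M = U * Matrix.diagonal d * star U := by
    have := hM.spectral_theorem
    simpa using this
  have hstarU : star U = Uᵀ := by
    ext i j; simp [Matrix.star_eq_conjTranspose, Matrix.conjTranspose_apply]
  have hMv : dotProduct v (M *ᵥ v) = dotProduct w (Matrix.diagonal d *ᵥ w) := by
    rw [hspec, ← Matrix.mulVec_mulVec, ← Matrix.mulVec_mulVec, Matrix.dotProduct_mulVec v U,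
      ← Matrix.mulVec_transpose, ← hstarU, hw]
  have hvv : dotProduct w w = dotProduct v v := by
    rw [hw, Matrix.dotProduct_mulVec ((star U) *ᵥ v) (star U) v, ← Matrix.mulVec_transpose,
      hstarU, Matrix.transpose_transpose, Matrix.mulVec_mulVec, ← hstarU, hUU,
      Matrix.one_mulVec]
  rw [hMv, ← hvv]
  simp only [dotProduct, Matrix.mulVec_diagonal, Finset.mul_sum]
  apply Finset.sum_le_sum
  intro i _
  have h1 : lb * (w i * w i) ≤ d i * (w i * w i) :=
    mul_le_mul_of_nonneg_right (hlb i) (mul_self_nonneg _)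
  nlinarith [h1]


set_option maxHeartbeats 1000000 in
open Polynomial in
/-- For the weight `exp(−x^β)` on `[0,∞)` with `β > 1/2`,
the smallest eigenvalue `lam N` of the `(N+1)×(N+1)` Hankel matrix tends to `0`
as `N → ∞`: the smallest eigenvalue of the infinite Hankel matrix is zero. -/
theorem smallest_eigenvalue_tendsto_zero
    (β : ℝ) (hβ : 1/2 < β)
    (μ : ℕ → ℝ) (hμ : ∀ k, μ k = ∫ x in Set.Ioi (0:ℝ), x ^ k * Real.exp (-(x ^ β)))
    (H : (N : ℕ) → Matrix (Fin (N + 1)) (Fin (N + 1)) ℝ)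
    (hH : ∀ N, ∀ j k : Fin (N + 1), H N j k = μ ((j : ℕ) + (k : ℕ)))
    (hpd : ∀ N, (H N).PosDef)
    (lam : ℕ → ℝ)
    (hlam : ∀ N, IsLeast
      {x : ℝ | Module.End.HasEigenvalue (Matrix.toLin' (H N)) x} (lam N)) :
    Tendsto lam atTop (nhds 0) := by
  have hβ0 : 0 < β := by linarith
  have hIn : ∀ n : ℕ, IntegrableOn (fun x : ℝ => x ^ n * Real.exp (-(x ^ β))) (Ioi 0) :=
    integ_pow_exp β hβ0
  have hIC : IntegrableOn (fun x : ℝ => Real.exp (-(x ^ β)/2)) (Ioi 0) := integ_exp_half β hβ0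
  set C : ℝ := ∫ x in Ioi (0:ℝ), Real.exp (-(x ^ β)/2) with hCdef
  have hC0 : 0 ≤ C := setIntegral_nonneg measurableSet_Ioi (fun x _ => (Real.exp_pos _).le)
  have hμ00 : 0 ≤ μ 0 := by
    rw [hμ 0]
    exact setIntegral_nonneg measurableSet_Ioi (fun x hx => by positivity)
  set K : ℝ := μ 0 + C with hKdef
  have hK0 : 0 ≤ K := by rw [hKdef]; linarith
  set ε : ℝ := 1 - β⁻¹/2 with hεdef
  have hβinv : β⁻¹ < 2 := by
    have h1 : β⁻¹ * β = 1 := inv_mul_cancel₀ hβ0.ne'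
    nlinarith [inv_pos.mpr hβ0]
  have hε0 : 0 < ε := by rw [hεdef]; linarith
  -- positivity of lam
  have hlampos : ∀ N, 0 < lam N := by
    intro N
    obtain ⟨v, hv⟩ := (hlam N).1.exists_hasEigenvector
    have h1 : (H N) *ᵥ v = lam N • v := by
      rw [← Matrix.toLin'_apply]; exact hv.apply_eq_smul
    have h2 : 0 < v ⬝ᵥ ((H N) *ᵥ v) := by
      have := (hpd N).dotProduct_mulVec_pos hv.2
      simpa using this
    rw [h1] at h2
    have h3 : 0 ≤ v ⬝ᵥ v := by
      apply Finset.sum_nonneg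
      intro i _
      exact mul_self_nonneg _
    have h4 : v ⬝ᵥ (lam N • v) = lam N * (v ⬝ᵥ v) := by
      simp [dotProduct, Finset.mul_sum]
      exact Finset.sum_congr rfl fun i _ => by ring
    rw [h4] at h2
    nlinarith [h2, h3]
  -- main bound
  have key : ∀ N : ℕ, 1 ≤ N →
      lam N ≤ 8*K*(N:ℝ)*Real.exp (-((8*(N:ℝ))^ε/8)) := by
    intro N hN1
    have hNR : (1:ℝ) ≤ (N:ℝ) := by exact_mod_cast hN1
    set R : ℝ := max 4 ((8*(N:ℝ)) ^ β⁻¹) with hRdef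
    have hR4 : (4:ℝ) ≤ R := le_max_left _ _
    have hR0 : (0:ℝ) < R := by linarith
    have h8N1 : (1:ℝ) ≤ 8*(N:ℝ) := by linarith
    have h8N0 : (0:ℝ) < 8*(N:ℝ) := by linarith
    have hRpow : 8*(N:ℝ) ≤ R ^ β := by
      have h1 : (8*(N:ℝ)) ^ β⁻¹ ≤ R := le_max_right _ _
      have h2 : ((8*(N:ℝ)) ^ β⁻¹) ^ β ≤ R ^ β :=
        Real.rpow_le_rpow (by positivity) h1 hβ0.le
      rwa [← Real.rpow_mul (by positivity), inv_mul_cancel₀ hβ0.ne', Real.rpow_one] at h2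
    have hz1 : (1:ℝ) ≤ (8*(N:ℝ)) ^ β⁻¹ := Real.one_le_rpow h8N1 (by positivity)
    have hRub : R ≤ 4 * (8*(N:ℝ)) ^ β⁻¹ := by
      apply max_le (by nlinarith) (by nlinarith)
    set s : ℝ := Real.sqrt R with hsdef
    have hs0 : 0 < s := Real.sqrt_pos.mpr hR0
    have hs2 : s ≤ 2 * (8*(N:ℝ)) ^ (β⁻¹/2) := by
      have h1 : s ≤ Real.sqrt (4 * (8*(N:ℝ)) ^ β⁻¹) := Real.sqrt_le_sqrt hRub
      have h2 : Real.sqrt (4 * (8*(N:ℝ)) ^ β⁻¹) = 2 * (8*(N:ℝ)) ^ (β⁻¹/2) := by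
        rw [Real.sqrt_mul (by norm_num : (0:ℝ) ≤ 4),
          show Real.sqrt 4 = 2 by
            rw [show (4:ℝ) = 2^2 by norm_num, Real.sqrt_sq (by norm_num : (0:ℝ) ≤ 2)],
          Real.sqrt_eq_rpow, ← Real.rpow_mul (by positivity)]
        norm_num
        congr 1
        ring
      linarith [h1, h2.le, h2.ge]
    -- the polynomial
    set q : ℝ[X] := (Chebyshev.T ℝ (N:ℤ)).comp (Polynomial.C (2/R) * Polynomial.X - 1) with hqdef
    have hdeg : q.natDegree < N + 1 := by
      have h1 : q.natDegree ≤ (Chebyshev.T ℝ (N:ℤ)).natDegree *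
          (Polynomial.C (2/R) * Polynomial.X - 1).natDegree := natDegree_comp_le
      have h2 : (Polynomial.C (2/R) * Polynomial.X - 1).natDegree ≤ 1 := by
        refine le_trans (natDegree_sub_le _ _) ?_
        have ha : (Polynomial.C (2/R) * Polynomial.X : ℝ[X]).natDegree ≤ 1 := by
          refine le_trans (natDegree_mul_le) ?_
          simp
        simp only [natDegree_one]
        omega
      have h3 := cheb_natDegree_le N
      calc q.natDegree ≤ _ := h1
        _ ≤ N * 1 := Nat.mul_le_mul h3 h2
        _ < N + 1 := by omega
    have heval : ∀ x : ℝ, q.eval x = (Chebyshev.T ℝ (N:ℤ)).eval (2/R*x - 1) := by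
      intro x; simp [hqdef, eval_comp]
    set c : ℕ → ℝ := fun j => q.coeff j with hcdef
    have hpoly : ∀ x : ℝ, q.eval x = ∑ j ∈ Finset.range (N+1), c j * x ^ j :=
      fun x => eval_eq_sum_range' hdeg x
    set v : Fin (N+1) → ℝ := fun j => c j with hvdef
    set P : ℝ → ℝ := fun x => (q.eval x)^2 * Real.exp (-(x ^ β)) with hPdef
    have hPsum : ∀ x : ℝ, P x = ∑ j ∈ Finset.range (N+1), ∑ k ∈ Finset.range (N+1),
        (c j * c k) * (x^(j+k) * Real.exp (-(x ^ β))) := by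
      intro x
      rw [hPdef]
      simp only
      rw [hpoly x, sq, Finset.sum_mul_sum, Finset.sum_mul]
      refine Finset.sum_congr rfl fun j _ => ?_
      rw [Finset.sum_mul]
      refine Finset.sum_congr rfl fun k _ => ?_
      rw [pow_add]; ring
    have hIntP : IntegrableOn P (Ioi 0) := by
      rw [show P = _ from funext hPsum]
      exact integrable_finset_sum _ (fun j _ =>
        integrable_finset_sum _ (fun k _ => ((hIn (j+k)).const_mul _)))
    have hlhs : v ⬝ᵥ ((H N) *ᵥ v) = ∑ j ∈ Finset.range (N+1), ∑ k ∈ Finset.range (N+1),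
        c j * c k * μ (j+k) := by
      have e1 : v ⬝ᵥ ((H N) *ᵥ v) =
          ∑ j : Fin (N+1), ∑ k : Fin (N+1), c (↑j) * c (↑k) * μ (↑j+↑k) := by
        simp only [dotProduct, Matrix.mulVec, hH N, hvdef, Finset.mul_sum]
        exact Finset.sum_congr rfl fun j _ => Finset.sum_congr rfl fun k _ => by ring
      rw [e1,
        Fin.sum_univ_eq_sum_range (fun j => ∑ k : Fin (N+1), c j * c ↑k * μ (j+↑k)) (N+1)]
      exact Finset.sum_congr rfl fun j _ =>
        Fin.sum_univ_eq_sum_range (fun k => c j * c k * μ (j+k)) (N+1)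
    have hrhs : ∫ x in Ioi (0:ℝ), P x = ∑ j ∈ Finset.range (N+1), ∑ k ∈ Finset.range (N+1),
        c j * c k * μ (j+k) := by
      rw [show P = _ from funext hPsum]
      rw [integral_finset_sum _ (fun j _ =>
        integrable_finset_sum _ (fun k _ => ((hIn (j+k)).const_mul _)))]
      refine Finset.sum_congr rfl fun j _ => ?_
      rw [integral_finset_sum _ (fun k _ => ((hIn (j+k)).const_mul _))]
      refine Finset.sum_congr rfl fun k _ => ?_
      rw [MeasureTheory.integral_const_mul, hμ (j+k)]
    have hquad : v ⬝ᵥ ((H N) *ᵥ v) = ∫ x in Ioi (0:ℝ), P x := by rw [hlhs, hrhs]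
    -- split the integral
    have hsplit : ∫ x in Ioi (0:ℝ), P x = (∫ x in Ioc (0:ℝ) R, P x) + ∫ x in Ioi R, P x := by
      rw [← setIntegral_union (Set.Ioc_disjoint_Ioi le_rfl) measurableSet_Ioi
        (hIntP.mono_set Set.Ioc_subset_Ioi_self) (hIntP.mono_set (Set.Ioi_subset_Ioi hR0.le)),
        Set.Ioc_union_Ioi_eq_Ioi hR0.le]
    have hbound1 : ∫ x in Ioc (0:ℝ) R, P x ≤ μ 0 := by
      have step1 : ∫ x in Ioc (0:ℝ) R, P x ≤
          ∫ x in Ioc (0:ℝ) R, (x^(0:ℕ) * Real.exp (-(x ^ β))) := by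
        apply setIntegral_mono_on (hIntP.mono_set Set.Ioc_subset_Ioi_self)
          ((hIn 0).mono_set Set.Ioc_subset_Ioi_self) measurableSet_Ioc
        intro x hx
        obtain ⟨hx0, hxR⟩ := hx
        have hy : |2/R*x - 1| ≤ 1 := by
          rw [abs_le]
          constructor
          · have : 0 < 2/R*x := by positivity
            linarith
          · have h1 : 2/R*x ≤ 2 := by
              rw [div_mul_eq_mul_div, div_le_iff₀ hR0]; nlinarith
            linarith
        have hT := cheb_abs_le N hy
        have hsq : (q.eval x)^2 ≤ 1 := by
          rw [heval x, ← sq_abs]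
          nlinarith [hT, abs_nonneg ((Chebyshev.T ℝ (N:ℤ)).eval (2/R*x - 1))]
        have hw : 0 < Real.exp (-(x ^ β)) := Real.exp_pos _
        simp only [hPdef, pow_zero, one_mul]
        calc (q.eval x)^2 * Real.exp (-(x ^ β)) ≤ 1 * Real.exp (-(x ^ β)) :=
              mul_le_mul_of_nonneg_right hsq hw.le
          _ = Real.exp (-(x ^ β)) := one_mul _
      have step2 : ∫ x in Ioc (0:ℝ) R, (x^(0:ℕ) * Real.exp (-(x ^ β))) ≤
          ∫ x in Ioi (0:ℝ), (x^(0:ℕ) * Real.exp (-(x ^ β))) := by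
        apply setIntegral_mono_set (hIn 0)
        · filter_upwards with x
          positivity
        · exact HasSubset.Subset.eventuallyLE Set.Ioc_subset_Ioi_self
      rw [hμ 0]
      exact le_trans step1 step2
    have hbound2 : ∫ x in Ioi R, P x ≤ C := by
      have step1 : ∫ x in Ioi R, P x ≤ ∫ x in Ioi R, Real.exp (-(x ^ β)/2) := by
        apply setIntegral_mono_on (hIntP.mono_set (Set.Ioi_subset_Ioi hR0.le))
          (hIC.mono_set (Set.Ioi_subset_Ioi hR0.le)) measurableSet_Ioi
        intro x hx
        have hxR : R < x := hx
        have hx0 : 0 < x := lt_trans hR0 hxR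
        set u : ℝ := 2/R*x - 2 with hudef
        have hu0 : 0 ≤ u := by
          rw [hudef]
          have : 2 ≤ 2/R*x := by
            rw [div_mul_eq_mul_div, le_div_iff₀ hR0]; nlinarith
          linarith
        have hT : (q.eval x)^2 ≤ Real.exp (2*(N:ℝ)*Real.sqrt (2*u)) := by
          rw [heval x, show 2/R*x - 1 = 1 + u by rw [hudef]; ring]
          exact cheb_upper N hu0
        have h2u : 2*u = 4*(x-R)/R := by
          rw [hudef]; field_simp; ring
        have hsqrt4 : Real.sqrt 4 = 2 := by
          rw [show (4:ℝ) = 2^2 by norm_num, Real.sqrt_sq (by norm_num : (0:ℝ) ≤ 2)]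
        have hsqle : Real.sqrt (2*u) ≤ 2 * Real.sqrt x / s := by
          have h1 : 2*u ≤ 4*x/R := by
            rw [h2u]
            gcongr
            linarith
          calc Real.sqrt (2*u) ≤ Real.sqrt (4*x/R) := Real.sqrt_le_sqrt h1
            _ = 2 * Real.sqrt x / s := by
                rw [Real.sqrt_div (by positivity : (0:ℝ) ≤ 4*x) R,
                  Real.sqrt_mul (by norm_num : (0:ℝ) ≤ 4) x, hsqrt4, hsdef]
        have hstep : 2*(N:ℝ)*Real.sqrt (2*u) ≤ x ^ β/2 := by
          have hA : 2*(N:ℝ)*Real.sqrt (2*u) ≤ 4*(N:ℝ)*Real.sqrt x / s := by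
            have := mul_le_mul_of_nonneg_left hsqle (by positivity : (0:ℝ) ≤ 2*(N:ℝ))
            calc 2*(N:ℝ)*Real.sqrt (2*u) ≤ 2*(N:ℝ) * (2*Real.sqrt x / s) := this
              _ = 4*(N:ℝ)*Real.sqrt x / s := by ring
          have hB : 4*(N:ℝ)*Real.sqrt x / s ≤ x ^ β/2 := by
            rw [div_le_div_iff₀ hs0 (by norm_num : (0:ℝ) < 2)]
            have hxβ : x ^ β = Real.sqrt x * x^(β - 1/2) := by
              rw [Real.sqrt_eq_rpow, ← Real.rpow_add hx0]
              congr 1; ring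
            have hxR' : R^(β-1/2) ≤ x^(β-1/2) :=
              Real.rpow_le_rpow hR0.le hxR.le (by linarith)
            have hsR : s * R^(β-1/2) = R ^ β := by
              rw [hsdef, Real.sqrt_eq_rpow, ← Real.rpow_add hR0]
              congr 1; ring
            have hsx : 0 ≤ Real.sqrt x := Real.sqrt_nonneg x
            calc 4*(N:ℝ)*Real.sqrt x * 2 = Real.sqrt x * (8*(N:ℝ)) := by ring
              _ ≤ Real.sqrt x * (R ^ β) := by
                  apply mul_le_mul_of_nonneg_left hRpow hsx
              _ = Real.sqrt x * (s * R^(β-1/2)) := by rw [hsR]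
              _ ≤ Real.sqrt x * (s * x^(β-1/2)) := by
                  apply mul_le_mul_of_nonneg_left ?_ hsx
                  exact mul_le_mul_of_nonneg_left hxR' hs0.le
              _ = x ^ β * s := by rw [hxβ]; ring
          linarith
        have hend : P x ≤ Real.exp (-(x ^ β)/2) := by
          rw [hPdef]
          simp only
          calc (q.eval x)^2 * Real.exp (-(x ^ β))
              ≤ Real.exp (2*(N:ℝ)*Real.sqrt (2*u)) * Real.exp (-(x ^ β)) :=
                mul_le_mul_of_nonneg_right hT (Real.exp_pos _).le
            _ ≤ Real.exp (x ^ β/2) * Real.exp (-(x ^ β)) := by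
                apply mul_le_mul_of_nonneg_right (Real.exp_le_exp.mpr hstep) (Real.exp_pos _).le
            _ = Real.exp (-(x ^ β)/2) := by
                rw [← Real.exp_add]; congr 1; ring
        exact hend
      have step2 : ∫ x in Ioi R, Real.exp (-(x ^ β)/2) ≤ C := by
        rw [hCdef]
        apply setIntegral_mono_set hIC
        · filter_upwards with x using (Real.exp_pos _).le
        · exact HasSubset.Subset.eventuallyLE (Set.Ioi_subset_Ioi hR0.le)
      exact le_trans step1 step2
    -- denominator bounds
    have hCS : (q.eval (-1))^2 ≤ ((N:ℝ)+1) * (v ⬝ᵥ v) := by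
      have h1 : q.eval (-1) = ∑ j ∈ Finset.range (N+1), c j * (-1)^j := hpoly (-1)
      have h2 := Finset.sum_mul_sq_le_sq_mul_sq (Finset.range (N+1))
        (fun j => c j) (fun j => (-1:ℝ)^j)
      have h3 : ∑ j ∈ Finset.range (N+1), ((-1:ℝ)^j)^2 = (N:ℝ)+1 := by
        have : ∀ j ∈ Finset.range (N+1), ((-1:ℝ)^j)^2 = 1 := by
          intro j _
          rw [← pow_mul, mul_comm, pow_mul]
          norm_num
        rw [Finset.sum_congr rfl this, Finset.sum_const, Finset.card_range]
        push_cast; ring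
      have h4 : v ⬝ᵥ v = ∑ j ∈ Finset.range (N+1), (c j)^2 := by
        have e1 : v ⬝ᵥ v = ∑ j : Fin (N+1), (c (↑j))^2 := by
          simp only [dotProduct, hvdef]
          exact Finset.sum_congr rfl fun j _ => by ring
        rw [e1]
        exact Fin.sum_univ_eq_sum_range (fun j => (c j)^2) (N+1)
      rw [h1, h4]
      rw [h3] at h2
      calc (∑ j ∈ Finset.range (N+1), c j * (-1)^j)^2
          ≤ (∑ j ∈ Finset.range (N+1), (c j)^2) * ((N:ℝ)+1) := h2
        _ = ((N:ℝ)+1) * ∑ j ∈ Finset.range (N+1), (c j)^2 := by ring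
    have hlow : Real.exp (2*(N:ℝ)/s)/4 ≤ (q.eval (-1))^2 := by
      have heval1 : q.eval (-1) = (Chebyshev.T ℝ (N:ℤ)).eval (-(1 + 2/R)) := by
        rw [heval]; congr 1; field_simp; ring
      have hpar : (q.eval (-1))^2 = ((Chebyshev.T ℝ (N:ℤ)).eval (1 + 2/R))^2 := by
        rw [heval1, cheb_eval_neg, mul_pow,
          show ((-1:ℝ)^N)^2 = 1 by rw [← pow_mul, mul_comm, pow_mul]; norm_num, one_mul]
      have hu00 : (0:ℝ) ≤ 2/R := by positivity
      have h2u0 : Real.sqrt (2*(2/R)) ≤ 1 := by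
        rw [show (1:ℝ) = Real.sqrt 1 by simp]
        apply Real.sqrt_le_sqrt
        rw [show 2*(2/R) = 4/R by ring, div_le_one hR0]
        linarith
      have hlb := cheb_lower N hu00 h2u0
      have hsqrt : Real.sqrt (2*(2/R)) = 2/s := by
        rw [show 2*(2/R) = 4/R by ring, Real.sqrt_div (by norm_num : (0:ℝ) ≤ 4) R,
          show Real.sqrt 4 = 2 by
            rw [show (4:ℝ) = 2^2 by norm_num, Real.sqrt_sq (by norm_num : (0:ℝ) ≤ 2)],
          hsdef]
      rw [hsqrt, show (N:ℝ)*(2/s)/2 = (N:ℝ)/s by field_simp] at hlb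
      rw [hpar]
      have e : (Real.exp ((N:ℝ)/s)/2)^2 = Real.exp (2*(N:ℝ)/s)/4 := by
        rw [div_pow, sq, ← Real.exp_add]
        norm_num
        congr 2
        ring
      rw [← e]
      exact pow_le_pow_left₀ (by positivity) hlb 2
    -- assemble
    have hEig : ∀ i, lam N ≤ (hpd N).1.eigenvalues i := fun i =>
      (hlam N).2 (hasEig_toLin' (hpd N).1 i)
    have hray := rayleigh_lower (hpd N).1 hEig v
    have h5 : lam N * (v ⬝ᵥ v) ≤ K := by
      rw [hKdef]
      calc lam N * (v ⬝ᵥ v) ≤ v ⬝ᵥ ((H N) *ᵥ v) := hray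
        _ = ∫ x in Ioi (0:ℝ), P x := hquad
        _ = (∫ x in Ioc (0:ℝ) R, P x) + ∫ x in Ioi R, P x := hsplit
        _ ≤ μ 0 + C := add_le_add hbound1 hbound2
    have hvv0 : 0 ≤ v ⬝ᵥ v := by
      apply Finset.sum_nonneg
      intro i _
      exact mul_self_nonneg _
    have h6 : lam N * (Real.exp (2*(N:ℝ)/s)/4) ≤ ((N:ℝ)+1) * K := by
      calc lam N * (Real.exp (2*(N:ℝ)/s)/4) ≤ lam N * ((q.eval (-1))^2) :=
            mul_le_mul_of_nonneg_left hlow (hlampos N).le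
        _ ≤ lam N * (((N:ℝ)+1) * (v ⬝ᵥ v)) :=
            mul_le_mul_of_nonneg_left hCS (hlampos N).le
        _ = ((N:ℝ)+1) * (lam N * (v ⬝ᵥ v)) := by ring
        _ ≤ ((N:ℝ)+1) * K := by
            apply mul_le_mul_of_nonneg_left h5 (by positivity)
    have hfin : lam N ≤ 4*((N:ℝ)+1)*K*Real.exp (-(2*(N:ℝ)/s)) := by
      have hE : (0:ℝ) < Real.exp (2*(N:ℝ)/s) := Real.exp_pos _
      calc lam N = (lam N * (Real.exp (2*(N:ℝ)/s)/4)) * (4 * Real.exp (-(2*(N:ℝ)/s))) := by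
            rw [Real.exp_neg]; field_simp
        _ ≤ (((N:ℝ)+1)*K) * (4 * Real.exp (-(2*(N:ℝ)/s))) :=
            mul_le_mul_of_nonneg_right h6 (by positivity)
        _ = 4*((N:ℝ)+1)*K*Real.exp (-(2*(N:ℝ)/s)) := by ring
    have hexp : Real.exp (-(2*(N:ℝ)/s)) ≤ Real.exp (-((8*(N:ℝ))^ε/8)) := by
      apply Real.exp_le_exp.mpr
      rw [neg_le_neg_iff]
      rw [div_le_div_iff₀ (by norm_num : (0:ℝ) < 8) hs0]
      have h1 : s * (8*(N:ℝ))^ε ≤ (2 * (8*(N:ℝ))^(β⁻¹/2)) * (8*(N:ℝ))^ε :=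
        mul_le_mul_of_nonneg_right hs2 (Real.rpow_nonneg h8N0.le ε)
      have h2 : (8*(N:ℝ))^(β⁻¹/2) * (8*(N:ℝ))^ε = 8*(N:ℝ) := by
        rw [← Real.rpow_add h8N0, hεdef, show β⁻¹/2 + (1 - β⁻¹/2) = 1 by ring,
          Real.rpow_one]
      calc (8*(N:ℝ))^ε * s = s * (8*(N:ℝ))^ε := by ring
        _ ≤ 2 * ((8*(N:ℝ))^(β⁻¹/2) * (8*(N:ℝ))^ε) := by linarith [h1]
        _ = 2 * (8*(N:ℝ)) := by rw [h2]
        _ = 2*(N:ℝ) * 8 := by ring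
    calc lam N ≤ 4*((N:ℝ)+1)*K*Real.exp (-(2*(N:ℝ)/s)) := hfin
      _ ≤ 4*((N:ℝ)+1)*K*Real.exp (-((8*(N:ℝ))^ε/8)) := by
          apply mul_le_mul_of_nonneg_left hexp (by positivity)
      _ ≤ 8*K*(N:ℝ)*Real.exp (-((8*(N:ℝ))^ε/8)) := by
          have h44 : 4*((N:ℝ)+1) ≤ 8*(N:ℝ) := by linarith
          have he := (Real.exp_pos (-((8*(N:ℝ))^ε/8))).le
          calc 4*((N:ℝ)+1)*K*Real.exp (-((8*(N:ℝ))^ε/8))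
              = (4*((N:ℝ)+1)) * (K * Real.exp (-((8*(N:ℝ))^ε/8))) := by ring
            _ ≤ (8*(N:ℝ)) * (K * Real.exp (-((8*(N:ℝ))^ε/8))) :=
                mul_le_mul_of_nonneg_right h44 (mul_nonneg hK0 he)
            _ = 8*K*(N:ℝ)*Real.exp (-((8*(N:ℝ))^ε/8)) := by ring
  -- the limit
  have hg : Tendsto (fun N : ℕ => 8*K*(N:ℝ)*Real.exp (-((8*(N:ℝ))^ε/8))) atTop (𝓝 0) := by
    have hF := tendsto_rpow_mul_exp_neg_mul_atTop_nhds_zero ε⁻¹ (1/8) (by norm_num)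
    have hcomp : Tendsto (fun N : ℕ => (8*(N:ℝ))^ε) atTop atTop := by
      apply (tendsto_rpow_atTop hε0).comp
      exact Filter.Tendsto.const_mul_atTop (by norm_num : (0:ℝ) < 8) tendsto_natCast_atTop_atTop
    have hK' := (hF.comp hcomp).const_mul K
    rw [mul_zero] at hK'
    refine Tendsto.congr (fun N => ?_) hK'
    simp only [Function.comp_apply]
    have h1 : (((8*(N:ℝ))^ε)^(ε⁻¹)) = 8*(N:ℝ) := by
      rw [← Real.rpow_mul (by positivity), mul_inv_cancel₀ hε0.ne', Real.rpow_one]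
    rw [h1, show -(1/8) * (8*(N:ℝ))^ε = -((8*(N:ℝ))^ε/8) by ring]
    ring
  refine squeeze_zero' (Eventually.of_forall fun N => (hlampos N).le) ?_ hg
  filter_upwards [eventually_ge_atTop 1] with N hN
  exact key N hN
end

section
/- Let a < b be real numbers, let f : [a,b] → ℝ be continuous, and let φ : [a,b] → ℝ be continuously differentiable with φ′(b) > 0 and φ(x) < φ(b) for all x ∈ [a,b). Then lim_{N→∞} N φ′(b) e^{−N φ(b)} ∫_a^b f(x) e^{N φ(x)} dx = f(b); i.e. ∫_a^b f(x) e^{N φ(x)} dx ∼ f(b) e^{N φ(b)} / (N φ′(b)) as N → ∞ (endpoint Laplace method). -/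
open MeasureTheory Real Filter Topology intervalIntegral

/-- Explicit integral of a decaying exponential. -/
lemma aux_int_exp (lam u v : ℝ) (hl : 0 < lam) :
    ∫ x in u..v, Real.exp (-(lam * (v - x))) = (1 - Real.exp (-(lam * (v - u)))) / lam := by
  have hder : ∀ x ∈ Set.uIcc u v, HasDerivAt (fun y => Real.exp (-(lam * (v - y))) / lam)
      (Real.exp (-(lam * (v - x)))) x := by
    intro x _
    have h1 : HasDerivAt (fun y : ℝ => -(lam * (v - y))) lam x := by
      simpa [mul_sub, neg_sub] using ((hasDerivAt_id x).const_mul lam).sub_const (lam * v)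
    have h2 := (h1.exp).div_const lam
    rwa [mul_div_assoc, div_self hl.ne', mul_one] at h2
  have hint : IntervalIntegrable (fun x => Real.exp (-(lam * (v - x)))) volume u v :=
    (Real.continuous_exp.comp ((continuous_const.mul
      (continuous_const.sub continuous_id)).neg)).intervalIntegrable u v
  rw [intervalIntegral.integral_eq_sub_of_hasDerivAt hder hint]
  rw [sub_self, mul_zero, neg_zero, Real.exp_zero]
  ring

/-- FTC for a derivative within `Icc`. -/
lemma aux_ftc (a b : ℝ) (φ φ' : ℝ → ℝ)
    (hφ : ∀ x ∈ Set.Icc a b, HasDerivWithinAt φ (φ' x) (Set.Icc a b) x)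
    (hφ' : ContinuousOn φ' (Set.Icc a b))
    (x : ℝ) (hx : x ∈ Set.Icc a b) :
    ∫ t in x..b, φ' t = φ b - φ x := by
  have hφc : ContinuousOn φ (Set.Icc a b) := fun y hy => (hφ y hy).continuousWithinAt
  apply intervalIntegral.integral_eq_sub_of_hasDeriv_right_of_le hx.2
  · exact hφc.mono (Set.Icc_subset_Icc hx.1 le_rfl)
  · intro t ht
    have htm : t ∈ Set.Icc a b := ⟨le_trans hx.1 ht.1.le, ht.2.le⟩
    have h := (hφ t htm).hasDerivAt (Icc_mem_nhds (lt_of_le_of_lt hx.1 ht.1) ht.2)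
    exact h.hasDerivWithinAt
  · apply ContinuousOn.intervalIntegrable
    rw [Set.uIcc_of_le hx.2]
    exact hφ'.mono (Set.Icc_subset_Icc hx.1 le_rfl)

/-- `N·C·e^{-Nm} → 0` for `m > 0`. -/
lemma aux_decay (C m : ℝ) (hm : 0 < m) :
    Tendsto (fun N : ℕ => (N : ℝ) * C * Real.exp (-((N : ℝ) * m))) atTop (𝓝 0) := by
  have h0 : Tendsto (fun x : ℝ => x * Real.exp (-x)) atTop (𝓝 0) := by
    simpa using tendsto_pow_mul_exp_neg_atTop_nhds_zero 1
  have h1 : Tendsto (fun N : ℕ => (N : ℝ) * m) atTop atTop :=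
    Tendsto.atTop_mul_const hm tendsto_natCast_atTop_atTop
  have h2 := (h0.comp h1).mul_const (C / m)
  rw [zero_mul] at h2
  apply h2.congr
  intro N
  simp only [Function.comp_apply]
  field_simp

set_option maxHeartbeats 1000000 in
/-- **endpoint Laplace method.** If `f` is continuous on `[a,b]`,
`φ` is continuously differentiable on `[a,b]` with `φ′(b) > 0` and
`φ(x) < φ(b)` for all `x ∈ [a,b)`, then
`∫_a^b f(x) e^{Nφ(x)} dx ∼ f(b) e^{Nφ(b)}/(N φ′(b))` as `N → ∞`. -/
theorem laplace_method_endpoint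
    (a b : ℝ) (hab : a < b)
    (f φ φ' : ℝ → ℝ)
    (hf : ContinuousOn f (Set.Icc a b))
    (hφ : ∀ x ∈ Set.Icc a b, HasDerivWithinAt φ (φ' x) (Set.Icc a b) x)
    (hφ' : ContinuousOn φ' (Set.Icc a b))
    (hb : 0 < φ' b)
    (hmax : ∀ x ∈ Set.Ico a b, φ x < φ b) :
    Tendsto (fun N : ℕ =>
      (N : ℝ) * φ' b * Real.exp (-(N : ℝ) * φ b) *
        ∫ x in a..b, f x * Real.exp ((N : ℝ) * φ x))
      atTop (nhds (f b)) := by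
  set c := φ' b with hc_def
  have hc : 0 < c := hb
  have hφc : ContinuousOn φ (Set.Icc a b) := fun y hy => (hφ y hy).continuousWithinAt
  have hbmem : b ∈ Set.Icc a b := ⟨hab.le, le_rfl⟩
  have hamem : a ∈ Set.Icc a b := ⟨le_rfl, hab.le⟩
  -- continuity of integrands
  have hgc : ∀ N : ℕ, ContinuousOn (fun x => f x * Real.exp ((N : ℝ) * (φ x - φ b)))
      (Set.Icc a b) := by
    intro N
    exact hf.mul (Real.continuous_exp.comp_continuousOn
      (continuousOn_const.mul (hφc.sub continuousOn_const)))
  have hec : ∀ N : ℕ, ContinuousOn (fun x => Real.exp ((N : ℝ) * (φ x - φ b)))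
      (Set.Icc a b) := by
    intro N
    exact Real.continuous_exp.comp_continuousOn
      (continuousOn_const.mul (hφc.sub continuousOn_const))
  have hgi : ∀ (N : ℕ) (u v : ℝ), u ∈ Set.Icc a b → v ∈ Set.Icc a b →
      IntervalIntegrable (fun x => f x * Real.exp ((N : ℝ) * (φ x - φ b))) volume u v := by
    intro N u v hu hv
    exact ((hgc N).mono (Set.uIcc_subset_Icc hu hv)).intervalIntegrable
  have hei : ∀ (N : ℕ) (u v : ℝ), u ∈ Set.Icc a b → v ∈ Set.Icc a b →
      IntervalIntegrable (fun x => Real.exp ((N : ℝ) * (φ x - φ b))) volume u v := by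
    intro N u v hu hv
    exact ((hec N).mono (Set.uIcc_subset_Icc hu hv)).intervalIntegrable
  -- Step A: rewrite the expression
  have hEq : ∀ N : ℕ, (N : ℝ) * c * Real.exp (-(N : ℝ) * φ b) *
      ∫ x in a..b, f x * Real.exp ((N : ℝ) * φ x)
      = (N : ℝ) * c * ∫ x in a..b, f x * Real.exp ((N : ℝ) * (φ x - φ b)) := by
    intro N
    have key : Real.exp (-(N : ℝ) * φ b) * ∫ x in a..b, f x * Real.exp ((N : ℝ) * φ x)
        = ∫ x in a..b, f x * Real.exp ((N : ℝ) * (φ x - φ b)) := by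
      rw [← intervalIntegral.integral_const_mul]
      apply intervalIntegral.integral_congr
      intro x _
      simp only
      rw [show (N : ℝ) * (φ x - φ b) = (N : ℝ) * φ x + -(N : ℝ) * φ b by ring, Real.exp_add]
      ring
    rw [mul_assoc, key]
  suffices h : Tendsto (fun N : ℕ =>
      (N : ℝ) * c * ∫ x in a..b, f x * Real.exp ((N : ℝ) * (φ x - φ b)))
      atTop (nhds (f b)) by
    apply h.congr
    intro N
    exact (hEq N).symm
  rw [Metric.tendsto_atTop]
  intro ε hε
  -- bound for f
  obtain ⟨M0, hM0⟩ := (isCompact_Icc).exists_bound_of_continuousOn hf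
  set M := max M0 0 with hM_def
  have hMnn : 0 ≤ M := le_max_right _ _
  have hM : ∀ x ∈ Set.Icc a b, |f x| ≤ M := fun x hx => le_trans (hM0 x hx) (le_max_left _ _)
  clear_value M
  -- small parameters
  set ε₁ := ε / 6 with hε₁_def
  have hε₁ : 0 < ε₁ := by positivity
  set ε₂ := min (c / 2) (min 1 (ε * c / (3 * (2 + 2 * c) * (|f b| + 1)))) with hε₂_def
  have hε₂ : 0 < ε₂ := by
    apply lt_min (by positivity)
    apply lt_min one_pos (by positivity)
  have hε₂c : ε₂ ≤ c / 2 := min_le_left _ _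
  have hε₂1 : ε₂ ≤ 1 := le_trans (min_le_right _ _) (min_le_left _ _)
  have hε₂ε : ε₂ ≤ ε * c / (3 * (2 + 2 * c) * (|f b| + 1)) :=
    le_trans (min_le_right _ _) (min_le_right _ _)
  clear_value ε₂
  -- δ from continuity of f at b
  have hfb := hf b hbmem
  rw [Metric.continuousWithinAt_iff] at hfb
  obtain ⟨δ₁, hδ₁pos, hδ₁⟩ := hfb ε₁ hε₁
  have hφ'b := hφ' b hbmem
  rw [Metric.continuousWithinAt_iff] at hφ'b
  obtain ⟨δ₂, hδ₂pos, hδ₂⟩ := hφ'b ε₂ hε₂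
  set δ := min (min (δ₁ / 2) (δ₂ / 2)) (b - a) with hδ_def
  have hδpos : 0 < δ := by
    apply lt_min (lt_min (by positivity) (by positivity)) (by linarith)
  have hδ1 : δ ≤ δ₁ / 2 := le_trans (min_le_left _ _) (min_le_left _ _)
  have hδ2 : δ ≤ δ₂ / 2 := le_trans (min_le_left _ _) (min_le_right _ _)
  have hδba : δ ≤ b - a := min_le_right _ _
  have hbd : b - δ ∈ Set.Icc a b := ⟨by linarith, by linarith⟩
  have hbdlt : b - δ < b := by linarith
  clear_value δ
  have hsub : Set.Icc (b - δ) b ⊆ Set.Icc a b := Set.Icc_subset_Icc hbd.1 le_rfl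
  -- f close to f b near b
  have hfsmall : ∀ x ∈ Set.Icc (b - δ) b, |f x - f b| ≤ ε₁ := by
    intro x hx
    have hx' : x ∈ Set.Icc a b := hsub hx
    have hd : dist x b < δ₁ := by
      rw [Real.dist_eq, abs_sub_comm, abs_of_nonneg (by linarith [hx.2] : (0:ℝ) ≤ b - x)]
      have := hx.1
      linarith
    have := hδ₁ hx' hd
    rw [Real.dist_eq] at this
    linarith
  -- φ' close to c near b
  have hφ'small : ∀ t ∈ Set.Icc (b - δ) b, |φ' t - c| ≤ ε₂ := by
    intro t ht
    have ht' : t ∈ Set.Icc a b := hsub ht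
    have hd : dist t b < δ₂ := by
      rw [Real.dist_eq, abs_sub_comm, abs_of_nonneg (by linarith [ht.2] : (0:ℝ) ≤ b - t)]
      have := ht.1
      linarith
    have := hδ₂ ht' hd
    rw [Real.dist_eq] at this
    linarith
  -- bounds on φ b - φ x near b
  have hphibound : ∀ x ∈ Set.Icc (b - δ) b,
      (c - ε₂) * (b - x) ≤ φ b - φ x ∧ φ b - φ x ≤ (c + ε₂) * (b - x) := by
    intro x hx
    have hx' : x ∈ Set.Icc a b := hsub hx
    have hftc := aux_ftc a b φ φ' hφ hφ' x hx'
    have hxb : x ≤ b := hx.2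
    have hφ'int : IntervalIntegrable φ' volume x b := by
      apply ContinuousOn.intervalIntegrable
      rw [Set.uIcc_of_le hxb]
      exact hφ'.mono (Set.Icc_subset_Icc hx'.1 le_rfl)
    have hin : ∀ t ∈ Set.Icc x b, t ∈ Set.Icc (b - δ) b := by
      intro t ht
      exact ⟨le_trans hx.1 ht.1, ht.2⟩
    constructor
    · rw [← hftc]
      have h1 : ∫ _t in x..b, (c - ε₂) ≤ ∫ t in x..b, φ' t :=
        intervalIntegral.integral_mono_on hxb intervalIntegrable_const hφ'int
          (fun t ht => by
            have hh := abs_le.mp (hφ'small t (hin t ht)); linarith [hh.1, hh.2])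
      rw [intervalIntegral.integral_const, smul_eq_mul] at h1
      linarith [h1]
    · rw [← hftc]
      have h1 : ∫ t in x..b, φ' t ≤ ∫ _t in x..b, (c + ε₂) :=
        intervalIntegral.integral_mono_on hxb hφ'int intervalIntegrable_const
          (fun t ht => by
            have hh := abs_le.mp (hφ'small t (hin t ht)); linarith [hh.1, hh.2])
      rw [intervalIntegral.integral_const, smul_eq_mul] at h1
      linarith [h1]
  -- maximum on the tail
  have hsub2 : Set.Icc a (b - δ) ⊆ Set.Icc a b := Set.Icc_subset_Icc le_rfl hbd.2
  obtain ⟨x₀, hx₀mem, hx₀max⟩ := (isCompact_Icc : IsCompact (Set.Icc a (b - δ))).exists_isMaxOn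
    (Set.nonempty_Icc.mpr hbd.1) (hφc.mono hsub2)
  set m := φ b - φ x₀ with hm_def
  have hm : 0 < m := by
    have : φ x₀ < φ b := hmax x₀ ⟨hx₀mem.1, lt_of_le_of_lt hx₀mem.2 hbdlt⟩
    simp only [hm_def]
    linarith
  -- eventual conditions
  have hE1 : ∀ᶠ N : ℕ in atTop, 1 ≤ N := eventually_ge_atTop 1
  have hE2 : ∀ᶠ N : ℕ in atTop,
      (N : ℝ) * (c * ((b - a) * M)) * Real.exp (-((N : ℝ) * m)) < ε / 3 := by
    have h := aux_decay (c * ((b - a) * M)) m hm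
    exact h.eventually_lt_const (by positivity)
  have hE3 : ∀ᶠ N : ℕ in atTop,
      (N : ℝ) * 1 * Real.exp (-((N : ℝ) * ((c + ε₂) * δ))) < ε₂ := by
    have h := aux_decay 1 ((c + ε₂) * δ) (by positivity)
    exact h.eventually_lt_const hε₂
  obtain ⟨N₀, hN₀⟩ := eventually_atTop.mp ((hE1.and hE2).and hE3)
  refine ⟨N₀, fun N hN => ?_⟩
  obtain ⟨⟨hN1, hN2⟩, hN3⟩ := hN₀ N hN
  have hNpos : (0 : ℝ) < N := by exact_mod_cast Nat.lt_of_lt_of_le Nat.zero_lt_one hN1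
  -- exponential small at N for e3
  have hE3' : Real.exp (-((N : ℝ) * ((c + ε₂) * δ))) ≤ ε₂ := by
    have h1 : Real.exp (-((N : ℝ) * ((c + ε₂) * δ)))
        ≤ (N : ℝ) * 1 * Real.exp (-((N : ℝ) * ((c + ε₂) * δ))) := by
      nlinarith [mul_le_mul_of_nonneg_right
        (by exact_mod_cast hN1 : (1:ℝ) ≤ (N:ℝ))
        (Real.exp_pos (-((N : ℝ) * ((c + ε₂) * δ)))).le]
    linarith
  -- notation
  set Tv := ∫ x in a..(b - δ), f x * Real.exp ((N : ℝ) * (φ x - φ b)) with hTv_def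
  set Pv := ∫ x in (b - δ)..b, f x * Real.exp ((N : ℝ) * (φ x - φ b)) with hPv_def
  set Kv := ∫ x in (b - δ)..b, Real.exp ((N : ℝ) * (φ x - φ b)) with hKv_def
  have hsplit : ∫ x in a..b, f x * Real.exp ((N : ℝ) * (φ x - φ b)) = Tv + Pv :=
    (intervalIntegral.integral_add_adjacent_intervals
      (hgi N a (b - δ) hamem hbd) (hgi N (b - δ) b hbd hbmem)).symm
  -- tail bound
  have hT : |Tv| ≤ M * Real.exp (-((N : ℝ) * m)) * (b - a) := by
    have h1 : |Tv| ≤ (M * Real.exp (-((N : ℝ) * m))) * |b - δ - a| := by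
      rw [hTv_def, ← Real.norm_eq_abs]
      apply intervalIntegral.norm_integral_le_of_norm_le_const
      intro x hx
      rw [Set.uIoc_of_le hbd.1] at hx
      have hx1 : x ∈ Set.Icc a (b - δ) := ⟨hx.1.le, hx.2⟩
      have hx2 : x ∈ Set.Icc a b := hsub2 hx1
      have hφle : φ x ≤ φ x₀ := hx₀max hx1
      have hexple : Real.exp ((N : ℝ) * (φ x - φ b)) ≤ Real.exp (-((N : ℝ) * m)) := by
        apply Real.exp_le_exp.mpr
        have : φ x - φ b ≤ -m := by simp only [hm_def]; linarith
        nlinarith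
      rw [Real.norm_eq_abs, abs_mul, abs_of_pos (Real.exp_pos _)]
      exact mul_le_mul (hM x hx2) hexple (Real.exp_pos _).le hMnn
    have h2 : |b - δ - a| ≤ b - a := by
      rw [abs_of_nonneg (by linarith)]
      linarith
    calc |Tv| ≤ (M * Real.exp (-((N : ℝ) * m))) * |b - δ - a| := h1
      _ ≤ (M * Real.exp (-((N : ℝ) * m))) * (b - a) := by
          apply mul_le_mul_of_nonneg_left h2 (by positivity)
      _ = M * Real.exp (-((N : ℝ) * m)) * (b - a) := by ring
  -- pointwise exponential bounds on [b-δ, b]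
  have hexp_up : ∀ x ∈ Set.Icc (b - δ) b,
      Real.exp ((N : ℝ) * (φ x - φ b)) ≤ Real.exp (-(((N : ℝ) * (c - ε₂)) * (b - x))) := by
    intro x hx
    apply Real.exp_le_exp.mpr
    have h := (hphibound x hx).1
    have h' := mul_le_mul_of_nonneg_left h hNpos.le
    linarith [h']
  have hexp_lo : ∀ x ∈ Set.Icc (b - δ) b,
      Real.exp (-(((N : ℝ) * (c + ε₂)) * (b - x))) ≤ Real.exp ((N : ℝ) * (φ x - φ b)) := by
    intro x hx
    apply Real.exp_le_exp.mpr
    have h := (hphibound x hx).2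
    have h' := mul_le_mul_of_nonneg_left h hNpos.le
    linarith [h']
  have hlam1 : (0 : ℝ) < (N : ℝ) * (c - ε₂) := by
    apply mul_pos hNpos
    linarith
  have hlam2 : (0 : ℝ) < (N : ℝ) * (c + ε₂) := by positivity
  -- bounds for Kv, phrased multiplicatively
  have hcexp : ∀ lam : ℝ, Continuous fun x : ℝ => Real.exp (-(lam * (b - x))) := fun lam =>
    Real.continuous_exp.comp ((continuous_const.mul (continuous_const.sub continuous_id)).neg)
  have hKv0 : 0 ≤ Kv := by
    rw [hKv_def]
    apply intervalIntegral.integral_nonneg hbdlt.le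
    intro x _
    exact (Real.exp_pos _).le
  have hKU : Kv * ((N : ℝ) * (c - ε₂)) ≤ 1 := by
    have h1 : Kv ≤ ∫ x in (b - δ)..b, Real.exp (-(((N : ℝ) * (c - ε₂)) * (b - x))) := by
      rw [hKv_def]
      exact intervalIntegral.integral_mono_on hbdlt.le (hei N _ _ hbd hbmem)
        (((hcexp ((N : ℝ) * (c - ε₂)))).intervalIntegrable _ _) hexp_up
    rw [aux_int_exp _ _ _ hlam1] at h1
    have h2 := mul_le_mul_of_nonneg_right h1 hlam1.le
    rw [div_mul_cancel₀ _ hlam1.ne'] at h2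
    have h3 : (0:ℝ) < Real.exp (-((N : ℝ) * (c - ε₂) * (b - (b - δ)))) := Real.exp_pos _
    linarith
  have hKL : 1 - ε₂ ≤ Kv * ((N : ℝ) * (c + ε₂)) := by
    have h1 : ∫ x in (b - δ)..b, Real.exp (-(((N : ℝ) * (c + ε₂)) * (b - x))) ≤ Kv := by
      rw [hKv_def]
      apply intervalIntegral.integral_mono_on hbdlt.le
        (((hcexp ((N : ℝ) * (c + ε₂)))).intervalIntegrable _ _) (hei N _ _ hbd hbmem) hexp_lo
    rw [aux_int_exp _ _ _ hlam2] at h1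
    have harg : (N : ℝ) * (c + ε₂) * (b - (b - δ)) = (N : ℝ) * ((c + ε₂) * δ) := by ring
    rw [harg] at h1
    have := mul_le_mul_of_nonneg_right h1 hlam2.le
    rw [div_mul_cancel₀ _ hlam2.ne'] at this
    linarith [hE3']
  -- main part bound
  have hP : |Pv - f b * Kv| ≤ ε₁ * Kv := by
    have heq : Pv - f b * Kv
        = ∫ x in (b - δ)..b, (f x - f b) * Real.exp ((N : ℝ) * (φ x - φ b)) := by
      rw [hPv_def, hKv_def, ← intervalIntegral.integral_const_mul,
        ← intervalIntegral.integral_sub (hgi N _ _ hbd hbmem)]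
      · apply intervalIntegral.integral_congr
        intro x _
        ring
      · exact (continuousOn_const.mul
          ((hec N).mono (Set.uIcc_subset_Icc hbd hbmem))).intervalIntegrable
    rw [heq]
    have habs := intervalIntegral.abs_integral_le_integral_abs
      (f := fun x => (f x - f b) * Real.exp ((N : ℝ) * (φ x - φ b))) (μ := volume) hbdlt.le
    have hmono : ∫ x in (b - δ)..b, |(f x - f b) * Real.exp ((N : ℝ) * (φ x - φ b))|
        ≤ ∫ x in (b - δ)..b, ε₁ * Real.exp ((N : ℝ) * (φ x - φ b)) := by
      apply intervalIntegral.integral_mono_on hbdlt.le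
      · apply ContinuousOn.intervalIntegrable
        apply ContinuousOn.abs
        rw [Set.uIcc_of_le hbdlt.le]
        exact ((hf.mono hsub).sub continuousOn_const).mul ((hec N).mono hsub)
      · apply ContinuousOn.intervalIntegrable
        rw [Set.uIcc_of_le hbdlt.le]
        exact continuousOn_const.mul ((hec N).mono hsub)
      · intro x hx
        rw [abs_mul, abs_of_pos (Real.exp_pos _)]
        exact mul_le_mul_of_nonneg_right (hfsmall x hx) (Real.exp_pos _).le
    rw [intervalIntegral.integral_const_mul] at hmono
    calc |∫ x in (b - δ)..b, (f x - f b) * Real.exp ((N : ℝ) * (φ x - φ b))|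
        ≤ ∫ x in (b - δ)..b, |(f x - f b) * Real.exp ((N : ℝ) * (φ x - φ b))| := habs
      _ ≤ ε₁ * Kv := hmono
  -- bound for |N c Kv - 1|
  clear_value Tv Pv Kv
  have hKNc : Kv * (N : ℝ) * c ≤ 2 := by
    have h := mul_le_mul_of_nonneg_left hε₂c (mul_nonneg hKv0 hNpos.le)
    nlinarith only [hKU, h]
  have hK3 : |(N : ℝ) * c * Kv - 1| ≤ ε₂ * (2 + 2 * c) / c := by
    rw [abs_le]
    constructor
    · have g1 : (1 - (N : ℝ) * c * Kv) ≤ ε₂ * (2 + 2 * c) / c := by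
        rw [le_div_iff₀ hc]
        nlinarith only [mul_le_mul_of_nonneg_right hKL hc.le,
          mul_le_mul_of_nonneg_right hKNc hε₂.le, hε₂, hc,
          mul_nonneg hc.le hε₂.le]
      linarith only [g1]
    · rw [le_div_iff₀ hc]
      nlinarith only [mul_le_mul_of_nonneg_right hKU hc.le,
        mul_le_mul_of_nonneg_right hKNc hε₂.le, hε₂, hc,
        mul_nonneg hc.le hε₂.le]
  -- final assembly
  rw [hsplit, Real.dist_eq]
  have hdecomp : (N : ℝ) * c * (Tv + Pv) - f b
      = (N : ℝ) * c * Tv + ((N : ℝ) * c * (Pv - f b * Kv) + f b * ((N : ℝ) * c * Kv - 1)) := by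
    ring
  rw [hdecomp]
  have ht1 : |(N : ℝ) * c * Tv| < ε / 3 := by
    rw [abs_mul, abs_of_pos (by positivity : (0:ℝ) < (N : ℝ) * c)]
    calc (N : ℝ) * c * |Tv| ≤ (N : ℝ) * c * (M * Real.exp (-((N : ℝ) * m)) * (b - a)) := by
          apply mul_le_mul_of_nonneg_left hT (by positivity)
      _ = (N : ℝ) * (c * ((b - a) * M)) * Real.exp (-((N : ℝ) * m)) := by ring
      _ < ε / 3 := hN2
  have ht2 : |(N : ℝ) * c * (Pv - f b * Kv)| ≤ ε / 3 := by
    rw [abs_mul, abs_of_pos (by positivity : (0:ℝ) < (N : ℝ) * c)]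
    have h1 : (N : ℝ) * c * |Pv - f b * Kv| ≤ (N : ℝ) * c * (ε₁ * Kv) :=
      mul_le_mul_of_nonneg_left hP (by positivity)
    have h2 : (N : ℝ) * c * (ε₁ * Kv) ≤ 2 * ε₁ := by
      nlinarith only [mul_le_mul_of_nonneg_right hKNc hε₁.le]
    have h3 : 2 * ε₁ = ε / 3 := by rw [hε₁_def]; ring
    linarith only [h1, h2, h3]
  have ht3 : |f b * ((N : ℝ) * c * Kv - 1)| ≤ ε / 3 := by
    rw [abs_mul]
    have h1 : |f b| * |(N : ℝ) * c * Kv - 1| ≤ |f b| * (ε₂ * (2 + 2 * c) / c) :=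
      mul_le_mul_of_nonneg_left hK3 (abs_nonneg _)
    have h2 : |f b| * (ε₂ * (2 + 2 * c) / c) ≤ ε / 3 := by
      rw [le_div_iff₀ (by positivity : (0:ℝ) < 3 * (2 + 2 * c) * (|f b| + 1))] at hε₂ε
      have hrw : |f b| * (ε₂ * (2 + 2 * c) / c) = |f b| * (ε₂ * (2 + 2 * c)) / c := by ring
      rw [hrw, div_le_div_iff₀ hc (by norm_num : (0:ℝ) < 3)]
      nlinarith only [hε₂ε, abs_nonneg (f b), hε₂.le, hc.le,
        mul_nonneg hε₂.le (by linarith [hc] : (0:ℝ) ≤ 2 + 2 * c),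
        mul_nonneg (mul_nonneg hε₂.le (by linarith [hc] : (0:ℝ) ≤ 2 + 2 * c)) (abs_nonneg (f b))]
    linarith only [h1, h2]
  calc |(N : ℝ) * c * Tv + ((N : ℝ) * c * (Pv - f b * Kv) + f b * ((N : ℝ) * c * Kv - 1))|
      ≤ |(N : ℝ) * c * Tv| + |(N : ℝ) * c * (Pv - f b * Kv) + f b * ((N : ℝ) * c * Kv - 1)| :=
        abs_add_le _ _
    _ ≤ |(N : ℝ) * c * Tv| + (|(N : ℝ) * c * (Pv - f b * Kv)| + |f b * ((N : ℝ) * c * Kv - 1)|) := by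
        linarith only [abs_add_le ((N : ℝ) * c * (Pv - f b * Kv)) (f b * ((N : ℝ) * c * Kv - 1))]
    _ < ε := by linarith only [ht1, ht2, ht3]
end

section
/- Let a < b be real numbers, let f : [a,b] → ℝ be continuous, let φ : [a,b] → ℝ be twice continuously differentiable, and let c ∈ (a,b) satisfy φ′(c) = 0, φ″(c) < 0, and φ(x) < φ(c) for all x ∈ [a,b] with x ≠ c. Then lim_{N→∞} √N · e^{−N φ(c)} ∫_a^b f(x) e^{N φ(x)} dx = f(c) · √(2π/(−φ″(c))); i.e. ∫_a^b f(x) e^{N φ(x)} dx ∼ f(c) e^{N φ(c)} √(2π/(−N φ″(c))) as N → ∞ (interior Laplace method). -/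
open MeasureTheory Real Filter Topology intervalIntegral

lemma laplace_taylor_aux
    (a b : ℝ)
    (φ φ' φ'' : ℝ → ℝ)
    (hφ : ∀ x ∈ Set.Icc a b, HasDerivWithinAt φ (φ' x) (Set.Icc a b) x)
    (hφ' : ∀ x ∈ Set.Icc a b, HasDerivWithinAt φ' (φ'' x) (Set.Icc a b) x)
    (hφ'' : ContinuousOn φ'' (Set.Icc a b))
    (c : ℝ) (hc : c ∈ Set.Ioo a b)
    (hc1 : φ' c = 0)
    {ε : ℝ} (hε : 0 < ε) :
    ∃ δ > 0, a ≤ c - δ ∧ c + δ ≤ b ∧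
      ∀ x, |x - c| ≤ δ → |φ x - φ c - φ'' c / 2 * (x - c) ^ 2| ≤ ε * (x - c) ^ 2 := by
  have hca : a < c := hc.1
  have hcb : c < b := hc.2
  have hIccnhds : Set.Icc a b ∈ 𝓝 c := Icc_mem_nhds hca hcb
  have hcont : ContinuousAt φ'' c := hφ''.continuousAt hIccnhds
  obtain ⟨δ₀, hδ₀, hδ₀'⟩ := Metric.continuousAt_iff.1 hcont ε hε
  set δ : ℝ := min (δ₀ / 2) (min (c - a) (b - c)) with hδdef
  have hδpos : 0 < δ := lt_min (by linarith) (lt_min (by linarith) (by linarith))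
  have hδa : δ ≤ c - a := (min_le_right _ _).trans (min_le_left _ _)
  have hδb : δ ≤ b - c := (min_le_right _ _).trans (min_le_right _ _)
  have hδ0' : δ < δ₀ := lt_of_le_of_lt (min_le_left _ _) (by linarith)
  refine ⟨δ, hδpos, by linarith, by linarith, ?_⟩
  have hderφ : ∀ y ∈ Set.Ioo a b, HasDerivAt φ (φ' y) y := fun y hy =>
    (hφ y (Set.Ioo_subset_Icc_self hy)).hasDerivAt (Icc_mem_nhds hy.1 hy.2)
  have hderφ' : ∀ y ∈ Set.Ioo a b, HasDerivAt φ' (φ'' y) y := fun y hy =>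
    (hφ' y (Set.Ioo_subset_Icc_self hy)).hasDerivAt (Icc_mem_nhds hy.1 hy.2)
  have hcontφ' : ContinuousOn φ' (Set.Icc a b) := fun y hy =>
    (hφ' y hy).continuousWithinAt
  -- step 1 : bound on φ'
  have step1 : ∀ y, |y - c| ≤ δ → |φ' y - φ'' c * (y - c)| ≤ ε * |y - c| := by
    intro y hy
    obtain ⟨hy1, hy2⟩ := abs_le.1 hy
    rcases lt_trichotomy y c with h | h | h
    · obtain ⟨ξ, hξ, hξeq⟩ := exists_hasDerivAt_eq_slope φ' φ'' h
        (hcontφ'.mono (Set.Icc_subset_Icc (by linarith) (by linarith)))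
        (fun z hz => hderφ' z ⟨by linarith [hz.1], by linarith [hz.2]⟩)
      have hξδ : |ξ - c| < δ₀ := abs_lt.2 ⟨by linarith [hξ.1], by linarith [hξ.2]⟩
      have hφ''ξ : |φ'' ξ - φ'' c| < ε := by
        have := hδ₀' (show dist ξ c < δ₀ by rw [Real.dist_eq]; exact hξδ)
        rwa [Real.dist_eq] at this
      rw [hc1] at hξeq
      have h2 : 0 - φ' y = φ'' ξ * (c - y) :=
        (div_eq_iff (by linarith : c - y ≠ 0)).1 hξeq.symm
      have hy' : φ' y = φ'' ξ * (y - c) := by linear_combination -h2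
      rw [hy']
      have he : φ'' ξ * (y - c) - φ'' c * (y - c) = (φ'' ξ - φ'' c) * (y - c) := by ring
      rw [he, abs_mul]
      exact mul_le_mul hφ''ξ.le le_rfl (abs_nonneg _) hε.le
    · simp [h, hc1]
    · obtain ⟨ξ, hξ, hξeq⟩ := exists_hasDerivAt_eq_slope φ' φ'' h
        (hcontφ'.mono (Set.Icc_subset_Icc (by linarith) (by linarith)))
        (fun z hz => hderφ' z ⟨by linarith [hz.1], by linarith [hz.2]⟩)
      have hξδ : |ξ - c| < δ₀ := abs_lt.2 ⟨by linarith [hξ.1], by linarith [hξ.2]⟩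
      have hφ''ξ : |φ'' ξ - φ'' c| < ε := by
        have := hδ₀' (show dist ξ c < δ₀ by rw [Real.dist_eq]; exact hξδ)
        rwa [Real.dist_eq] at this
      rw [hc1] at hξeq
      have h2 : φ' y - 0 = φ'' ξ * (y - c) :=
        (div_eq_iff (by linarith : y - c ≠ 0)).1 hξeq.symm
      have hy' : φ' y = φ'' ξ * (y - c) := by linear_combination h2
      rw [hy']
      have he : φ'' ξ * (y - c) - φ'' c * (y - c) = (φ'' ξ - φ'' c) * (y - c) := by ring
      rw [he, abs_mul]
      exact mul_le_mul hφ''ξ.le le_rfl (abs_nonneg _) hε.le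
  -- step 2 : MVT on ψ
  intro x hx
  obtain ⟨hx1, hx2⟩ := abs_le.1 hx
  set ψ : ℝ → ℝ := fun y => φ y - φ'' c / 2 * (y - c) ^ 2 with hψdef
  set ψ' : ℝ → ℝ := fun y => φ' y - φ'' c * (y - c) with hψ'def
  have hderψ : ∀ y ∈ Set.Ioo a b, HasDerivAt ψ (ψ' y) y := by
    intro y hy
    have h1 : HasDerivAt (fun y => φ'' c / 2 * (y - c) ^ 2) (φ'' c * (y - c)) y := by
      have := (((hasDerivAt_id y).sub_const c).pow 2).const_mul (φ'' c / 2)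
      refine this.congr_deriv ?_
      simp only [id_eq]
      ring
    exact (hderφ y hy).sub h1
  have hcontψ : ContinuousOn ψ (Set.Icc a b) := by
    apply ContinuousOn.sub (fun y hy => (hφ y hy).continuousWithinAt)
    fun_prop
  have heq : φ x - φ c - φ'' c / 2 * (x - c) ^ 2 = ψ x - ψ c := by
    simp only [hψdef]; ring
  rcases lt_trichotomy x c with h | h | h
  · obtain ⟨ξ, hξ, hξeq⟩ := exists_hasDerivAt_eq_slope ψ ψ' h
      (hcontψ.mono (Set.Icc_subset_Icc (by linarith) (by linarith)))
      (fun z hz => hderψ z ⟨by linarith [hz.1], by linarith [hz.2]⟩)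
    have hξx : |ξ - c| ≤ δ := abs_le.2 ⟨by linarith [hξ.1], by linarith [hξ.2]⟩
    have hb2 : |ξ - c| ≤ |x - c| := by
      have habs : |x - c| = c - x := by rw [abs_sub_comm]; exact abs_of_pos (by linarith)
      rw [habs]
      exact abs_le.2 ⟨by linarith [hξ.1], by linarith [hξ.2]⟩
    have h2 : ψ c - ψ x = ψ' ξ * (c - x) :=
      (div_eq_iff (by linarith : c - x ≠ 0)).1 hξeq.symm
    have key : ψ x - ψ c = ψ' ξ * (x - c) := by linear_combination -h2
    have hb1 : |ψ' ξ| ≤ ε * |ξ - c| := step1 ξ hξx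
    rw [heq, key, abs_mul]
    calc |ψ' ξ| * |x - c| ≤ (ε * |x - c|) * |x - c| :=
          mul_le_mul (hb1.trans (mul_le_mul_of_nonneg_left hb2 hε.le)) le_rfl
            (abs_nonneg _) (by positivity)
      _ = ε * (x - c) ^ 2 := by rw [mul_assoc, ← sq, sq_abs]
  · simp [h]
  · obtain ⟨ξ, hξ, hξeq⟩ := exists_hasDerivAt_eq_slope ψ ψ' h
      (hcontψ.mono (Set.Icc_subset_Icc (by linarith) (by linarith)))
      (fun z hz => hderψ z ⟨by linarith [hz.1], by linarith [hz.2]⟩)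
    have hξx : |ξ - c| ≤ δ := abs_le.2 ⟨by linarith [hξ.1], by linarith [hξ.2]⟩
    have hb2 : |ξ - c| ≤ |x - c| := by
      have habs : |x - c| = x - c := abs_of_pos (by linarith)
      rw [habs]
      exact abs_le.2 ⟨by linarith [hξ.1], by linarith [hξ.2]⟩
    have h2 : ψ x - ψ c = ψ' ξ * (x - c) :=
      (div_eq_iff (by linarith : x - c ≠ 0)).1 hξeq.symm
    have hb1 : |ψ' ξ| ≤ ε * |ξ - c| := step1 ξ hξx
    rw [heq, h2, abs_mul]
    calc |ψ' ξ| * |x - c| ≤ (ε * |x - c|) * |x - c| :=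
          mul_le_mul (hb1.trans (mul_le_mul_of_nonneg_left hb2 hε.le)) le_rfl
            (abs_nonneg _) (by positivity)
      _ = ε * (x - c) ^ 2 := by rw [mul_assoc, ← sq, sq_abs]

noncomputable def laplaceG (fe φe : ℝ → ℝ) (c : ℝ) (N : ℕ) (t : ℝ) : ℝ :=
  fe (t / Real.sqrt N + c) * Real.exp ((N:ℝ) * (φe (t / Real.sqrt N + c) - φe c))

noncomputable def laplaceF (fe φe : ℝ → ℝ) (a b c : ℝ) (N : ℕ) : ℝ → ℝ :=
  (Set.Ioc (Real.sqrt N * (a - c)) (Real.sqrt N * (b - c))).indicator (laplaceG fe φe c N)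

lemma laplace_sqrt_tendsto : Tendsto (fun N : ℕ => Real.sqrt N) atTop atTop := by
  apply tendsto_atTop_atTop.2
  intro C
  refine ⟨⌈C ^ 2⌉₊, fun m hm => ?_⟩
  have h1 : C ^ 2 ≤ (m : ℝ) := le_trans (Nat.le_ceil _) (by exact_mod_cast hm)
  calc C ≤ |C| := le_abs_self C
    _ = Real.sqrt (C ^ 2) := (Real.sqrt_sq_eq_abs C).symm
    _ ≤ Real.sqrt m := Real.sqrt_le_sqrt h1

set_option maxHeartbeats 1600000 in
/-- **interior Laplace method.** If `f` is continuous on `[a,b]`,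
`φ` is twice continuously differentiable on `[a,b]`, and `c ∈ (a,b)` satisfies
`φ′(c) = 0`, `φ″(c) < 0` and `φ(x) < φ(c)` for all `x ≠ c` in `[a,b]`, then
`∫_a^b f(x) e^{Nφ(x)} dx ∼ f(c) e^{Nφ(c)} √(2π/(−N φ″(c)))` as `N → ∞`. -/
theorem laplace_method_interior
    (a b : ℝ) (hab : a < b)
    (f φ φ' φ'' : ℝ → ℝ)
    (hf : ContinuousOn f (Set.Icc a b))
    (hφ : ∀ x ∈ Set.Icc a b, HasDerivWithinAt φ (φ' x) (Set.Icc a b) x)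
    (hφ' : ∀ x ∈ Set.Icc a b, HasDerivWithinAt φ' (φ'' x) (Set.Icc a b) x)
    (hφ'' : ContinuousOn φ'' (Set.Icc a b))
    (c : ℝ) (hc : c ∈ Set.Ioo a b)
    (hc1 : φ' c = 0) (hc2 : φ'' c < 0)
    (hmax : ∀ x ∈ Set.Icc a b, x ≠ c → φ x < φ c) :
    Tendsto (fun N : ℕ =>
      Real.sqrt N * Real.exp (-(N : ℝ) * φ c) *
        ∫ x in a..b, f x * Real.exp ((N : ℝ) * φ x))
      atTop (nhds (f c * Real.sqrt (2 * π / (-φ'' c)))) := by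
  have hca : a < c := hc.1
  have hcb : c < b := hc.2
  set A : ℝ := -φ'' c with hAdef
  have hA0 : 0 < A := neg_pos.2 hc2
  have hφc'' : φ'' c = -A := by rw [hAdef]; ring
  -- continuous extensions
  set fe : ℝ → ℝ := fun x => f (Set.projIcc a b hab.le x) with hfedef
  set φe : ℝ → ℝ := fun x => φ (Set.projIcc a b hab.le x) with hφedef
  have hφcont : ContinuousOn φ (Set.Icc a b) := fun x hx => (hφ x hx).continuousWithinAt
  have hfec : Continuous fe :=
    hf.comp_continuous (continuous_subtype_val.comp continuous_projIcc)
      (fun x => (Set.projIcc a b hab.le x).2)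
  have hφec : Continuous φe :=
    hφcont.comp_continuous (continuous_subtype_val.comp continuous_projIcc)
      (fun x => (Set.projIcc a b hab.le x).2)
  have hfeeq : ∀ x ∈ Set.Icc a b, fe x = f x := fun x hx => by
    simp only [hfedef, Set.projIcc_of_mem hab.le hx]
  have hφeeq : ∀ x ∈ Set.Icc a b, φe x = φ x := fun x hx => by
    simp only [hφedef, Set.projIcc_of_mem hab.le hx]
  have hcI : c ∈ Set.Icc a b := Set.Ioo_subset_Icc_self hc
  have hφec' : φe c = φ c := hφeeq c hcI
  -- bound on f
  obtain ⟨M, hM⟩ := isCompact_Icc.exists_bound_of_continuousOn hf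
  have hM0 : 0 ≤ M := le_trans (norm_nonneg _) (hM a (Set.left_mem_Icc.2 hab.le))
  -- Taylor bound with ε = A/4
  obtain ⟨δ, hδpos, hδa, hδb, hTay⟩ :=
    laplace_taylor_aux a b φ φ' φ'' hφ hφ' hφ'' c hc hc1 (show (0:ℝ) < A/4 by linarith)
  have hcen : ∀ x, |x - c| ≤ δ → φ x - φ c ≤ -(A/4) * (x - c)^2 := by
    intro x hx
    have h1 := (abs_le.1 (hTay x hx)).2
    rw [hφc''] at h1
    nlinarith [sq_nonneg (x - c)]
  -- tail bound
  set K := Set.Icc a b ∩ {x | δ ≤ |x - c|} with hKdef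
  have hKcpt : IsCompact K :=
    isCompact_Icc.inter_right (isClosed_le continuous_const ((continuous_id.sub continuous_const).abs))
  have haK : a ∈ K := by
    refine ⟨Set.left_mem_Icc.2 hab.le, ?_⟩
    simp only [Set.mem_setOf_eq]
    rw [abs_sub_comm, abs_of_pos (by linarith : (0:ℝ) < c - a)]
    linarith
  obtain ⟨x₀, hx₀K, hx₀max⟩ := hKcpt.exists_isMaxOn ⟨a, haK⟩ (hφcont.mono Set.inter_subset_left)
  set η : ℝ := φ c - φ x₀ with hηdef
  have hx₀ne : x₀ ≠ c := by
    intro h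
    have h2 := hx₀K.2
    rw [h] at h2
    simp only [Set.mem_setOf_eq, sub_self, abs_zero] at h2
    linarith
  have hη0 : 0 < η := sub_pos.2 (hmax x₀ hx₀K.1 hx₀ne)
  have hKb : ∀ x ∈ K, φ x ≤ φ c - η := by
    intro x hx
    have := hx₀max hx
    simp only [Set.mem_setOf_eq] at this
    rw [hηdef]
    linarith
  set L : ℝ := max (c - a) (b - c) with hLdef
  have hL0 : (0:ℝ) < L := lt_of_lt_of_le (by linarith) (le_max_left _ _)
  set μ : ℝ := min (A/4) (η / L^2) with hμdef
  have hμ0 : 0 < μ := lt_min (by linarith) (div_pos hη0 (pow_pos hL0 2))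
  -- measurability
  have hGc : ∀ N : ℕ, Continuous (laplaceG fe φe c N) := by
    intro N
    have h1 : Continuous fun t : ℝ => t / Real.sqrt N + c :=
      (continuous_id.div_const _).add continuous_const
    exact (hfec.comp h1).mul
      (Real.continuous_exp.comp (continuous_const.mul ((hφec.comp h1).sub continuous_const)))
  have hFm : ∀ N : ℕ, AEStronglyMeasurable (laplaceF fe φe a b c N) volume := fun N =>
    ((hGc N).aestronglyMeasurable).indicator measurableSet_Ioc
  have hbound_int : Integrable (fun t => M * Real.exp (-μ * t^2)) volume :=
    (integrable_exp_neg_mul_sq hμ0).const_mul M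
  -- domination
  have h_bound : ∀ N : ℕ, ∀ᵐ t : ℝ, ‖laplaceF fe φe a b c N t‖ ≤ M * Real.exp (-μ * t^2) := by
    intro N
    refine Filter.Eventually.of_forall (fun t => ?_)
    rw [Real.norm_eq_abs]
    by_cases ht : t ∈ Set.Ioc (Real.sqrt N * (a - c)) (Real.sqrt N * (b - c))
    · rcases Nat.eq_zero_or_pos N with hN | hN
      · subst hN
        simp only [Nat.cast_zero, Real.sqrt_zero, zero_mul, Set.mem_Ioc] at ht
        linarith [ht.1, ht.2]
      have hs0 : (0:ℝ) < Real.sqrt N := Real.sqrt_pos.2 (by exact_mod_cast hN)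
      have hsq : Real.sqrt N ^ 2 = (N:ℝ) := Real.sq_sqrt (Nat.cast_nonneg N)
      obtain ⟨ht1, ht2⟩ := ht
      have hx1 : a < t / Real.sqrt N + c := by
        have : a - c < t / Real.sqrt N := (lt_div_iff₀ hs0).2 (by linarith [ht1])
        linarith
      have hx2 : t / Real.sqrt N + c ≤ b := by
        have : t / Real.sqrt N ≤ b - c := (div_le_iff₀ hs0).2 (by linarith [ht2])
        linarith
      have hxI : t / Real.sqrt N + c ∈ Set.Icc a b := ⟨hx1.le, hx2⟩
      have htm : t ∈ Set.Ioc (Real.sqrt N * (a - c)) (Real.sqrt N * (b - c)) := ⟨ht1, ht2⟩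
      simp only [laplaceF]
      rw [Set.indicator_of_mem htm]
      simp only [laplaceG]
      rw [hfeeq _ hxI, hφeeq _ hxI, hφec']
      set x := t / Real.sqrt N + c with hxdef
      have hxc : x - c = t / Real.sqrt N := by rw [hxdef]; ring
      have hexp : (N:ℝ) * (φ x - φ c) ≤ -μ * t^2 := by
        by_cases hd : |x - c| ≤ δ
        · have h1 : φ x - φ c ≤ -(A/4) * (x - c)^2 := hcen x hd
          have h2 : (N:ℝ) * (x - c)^2 = t^2 := by
            rw [hxc, div_pow, hsq]
            field_simp
          have h3 : (N:ℝ) * (φ x - φ c) ≤ (N:ℝ) * (-(A/4) * (x - c)^2) :=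
            mul_le_mul_of_nonneg_left h1 (Nat.cast_nonneg N)
          have h4 : (N:ℝ) * (-(A/4) * (x - c)^2) = -(A/4) * t^2 := by
            rw [← h2]; ring
          have hμA : μ ≤ A/4 := min_le_left _ _
          nlinarith [sq_nonneg t]
        · push_neg at hd
          have hxK : x ∈ K := ⟨hxI, hd.le⟩
          have h1 : φ x ≤ φ c - η := hKb x hxK
          have hL1 : |t| ≤ Real.sqrt N * L := by
            refine abs_le.2 ⟨?_, ?_⟩
            · have h5 : Real.sqrt N * (c - a) ≤ Real.sqrt N * L :=
                mul_le_mul_of_nonneg_left (le_max_left _ _) hs0.le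
              nlinarith [ht1]
            · have h5 : Real.sqrt N * (b - c) ≤ Real.sqrt N * L :=
                mul_le_mul_of_nonneg_left (le_max_right _ _) hs0.le
              linarith
          have ht2' : t^2 ≤ (N:ℝ) * L^2 := by
            have h6 := mul_self_le_mul_self (abs_nonneg t) hL1
            nlinarith [sq_abs t, hsq]
          have h4 : (N:ℝ) * (φ x - φ c) ≤ (N:ℝ) * (-η) :=
            mul_le_mul_of_nonneg_left (by linarith : φ x - φ c ≤ -η) (Nat.cast_nonneg N)
          have h5 : η / L^2 * t^2 ≤ (N:ℝ) * η := by
            have h7 := mul_le_mul_of_nonneg_left ht2' (le_of_lt (div_pos hη0 (pow_pos hL0 2)))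
            have h8 : η / L^2 * ((N:ℝ) * L^2) = (N:ℝ) * η := by field_simp
            linarith
          have hμη : μ ≤ η / L^2 := min_le_right _ _
          nlinarith [sq_nonneg t]
      calc |f x * Real.exp ((N:ℝ) * (φ x - φ c))|
          = |f x| * Real.exp ((N:ℝ) * (φ x - φ c)) := by
            rw [abs_mul, abs_of_pos (Real.exp_pos _)]
        _ ≤ M * Real.exp (-μ * t^2) :=
            mul_le_mul (by simpa using hM x hxI) (Real.exp_le_exp.2 hexp)
              (Real.exp_pos _).le hM0
    · simp only [laplaceF]
      rw [Set.indicator_of_notMem ht]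
      simp only [abs_zero]
      exact mul_nonneg hM0 (Real.exp_pos _).le
  -- pointwise limit
  have h_lim : ∀ᵐ t : ℝ, Tendsto (fun N : ℕ => laplaceF fe φe a b c N t) atTop
      (𝓝 (f c * Real.exp (-(A/2) * t^2))) := by
    refine Filter.Eventually.of_forall (fun t => ?_)
    have hp : Tendsto (fun N : ℕ => Real.sqrt N * (a - c)) atTop atBot :=
      laplace_sqrt_tendsto.atTop_mul_const_of_neg (by linarith : a - c < 0)
    have hq : Tendsto (fun N : ℕ => Real.sqrt N * (b - c)) atTop atTop :=
      laplace_sqrt_tendsto.atTop_mul_const (by linarith : (0:ℝ) < b - c)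
    have hev : ∀ᶠ N : ℕ in atTop, laplaceF fe φe a b c N t = laplaceG fe φe c N t := by
      filter_upwards [hp.eventually_lt_atBot t, hq.eventually_ge_atTop t] with N h1 h2
      have htm : t ∈ Set.Ioc (Real.sqrt N * (a - c)) (Real.sqrt N * (b - c)) := ⟨h1, h2⟩
      simp only [laplaceF]
      rw [Set.indicator_of_mem htm]
    rw [tendsto_congr' hev]
    have harg : Tendsto (fun N : ℕ => t / Real.sqrt N + c) atTop (𝓝 c) := by
      have h0 : Tendsto (fun N : ℕ => t / Real.sqrt N) atTop (𝓝 0) :=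
        Filter.Tendsto.div_atTop tendsto_const_nhds laplace_sqrt_tendsto
      simpa using h0.add (tendsto_const_nhds (x := c))
    have h1 : Tendsto (fun N : ℕ => fe (t / Real.sqrt N + c)) atTop (𝓝 (f c)) := by
      have := (hfec.continuousAt (x := c)).tendsto.comp harg
      rwa [hfeeq c hcI] at this
    have h2 : Tendsto (fun N : ℕ => (N:ℝ) * (φe (t / Real.sqrt N + c) - φe c)) atTop
        (𝓝 (-(A/2) * t^2)) := by
      rw [Metric.tendsto_nhds]
      intro ε' hε'
      have hε4 : (0:ℝ) < ε' / (2 * (t^2 + 1)) := div_pos hε' (by positivity)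
      obtain ⟨δ', hδ'pos, hδ'a, hδ'b, hTay'⟩ :=
        laplace_taylor_aux a b φ φ' φ'' hφ hφ' hφ'' c hc hc1 hε4
      filter_upwards [laplace_sqrt_tendsto.eventually_ge_atTop ((|t| + 1) / δ'),
        eventually_ge_atTop 1] with N hN hN1
      have hs0 : (0:ℝ) < Real.sqrt N := lt_of_lt_of_le (div_pos (by positivity) hδ'pos) hN
      have hsq2 : Real.sqrt N ^ 2 = (N:ℝ) := Real.sq_sqrt (Nat.cast_nonneg N)
      have hh : |t / Real.sqrt N| ≤ δ' := by
        rw [abs_div, abs_of_pos hs0, div_le_iff₀ hs0]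
        have h7 := mul_le_mul_of_nonneg_left hN hδ'pos.le
        have heq2 : δ' * ((|t| + 1) / δ') = |t| + 1 := by field_simp
        linarith
      have hxc : t / Real.sqrt N + c - c = t / Real.sqrt N := by ring
      obtain ⟨ha1, ha2⟩ := abs_le.1 hh
      have hxI : t / Real.sqrt N + c ∈ Set.Icc a b := ⟨by linarith, by linarith⟩
      have hTx := hTay' (t / Real.sqrt N + c) (by rw [hxc]; exact hh)
      rw [hxc] at hTx
      have hNh : (N:ℝ) * (t / Real.sqrt N)^2 = t^2 := by
        have hN0 : (N:ℝ) ≠ 0 := by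
          have : (1:ℝ) ≤ (N:ℝ) := by exact_mod_cast hN1
          linarith
        rw [div_pow, hsq2]
        field_simp
      rw [Real.dist_eq, hφeeq _ hxI, hφec']
      have expand : (N:ℝ) * (φ (t / Real.sqrt N + c) - φ c) - (-(A/2) * t^2) =
          (N:ℝ) * (φ (t / Real.sqrt N + c) - φ c - φ'' c / 2 * (t / Real.sqrt N)^2) := by
        rw [hφc'']
        linear_combination (-(A/2)) * hNh
      rw [expand, abs_mul, abs_of_nonneg (Nat.cast_nonneg N : (0:ℝ) ≤ (N:ℝ))]
      have key : (N:ℝ) * |φ (t / Real.sqrt N + c) - φ c - φ'' c / 2 * (t / Real.sqrt N)^2|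
          ≤ ε' / (2 * (t^2 + 1)) * t^2 := by
        calc (N:ℝ) * |φ (t / Real.sqrt N + c) - φ c - φ'' c / 2 * (t / Real.sqrt N)^2|
            ≤ (N:ℝ) * (ε' / (2 * (t^2 + 1)) * (t / Real.sqrt N)^2) :=
              mul_le_mul_of_nonneg_left hTx (Nat.cast_nonneg N)
          _ = ε' / (2 * (t^2 + 1)) * ((N:ℝ) * (t / Real.sqrt N)^2) := by ring
          _ = ε' / (2 * (t^2 + 1)) * t^2 := by rw [hNh]
      have hlt : ε' / (2 * (t^2 + 1)) * t^2 < ε' := by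
        rw [div_mul_eq_mul_div, div_lt_iff₀ (by positivity)]
        nlinarith [sq_nonneg t]
      linarith
    have h2' : Tendsto (fun N : ℕ =>
        Real.exp ((N:ℝ) * (φe (t / Real.sqrt N + c) - φe c))) atTop
        (𝓝 (Real.exp (-(A/2) * t^2))) :=
      (Real.continuous_exp.continuousAt.tendsto).comp h2
    have := h1.mul h2'
    apply this.congr
    intro N
    simp only [laplaceG]
  -- dominated convergence
  have main : Tendsto (fun N : ℕ => ∫ t : ℝ, laplaceF fe φe a b c N t) atTop
      (𝓝 (∫ t : ℝ, f c * Real.exp (-(A/2) * t^2))) :=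
    tendsto_integral_of_dominated_convergence _ hFm hbound_int h_bound h_lim
  have hval : (∫ t : ℝ, f c * Real.exp (-(A/2) * t^2)) = f c * Real.sqrt (2 * π / A) := by
    rw [MeasureTheory.integral_const_mul, integral_gaussian (A/2)]
    congr 2
    field_simp
  rw [hval] at main
  -- eventual equality with the original expression
  have heq : ∀ᶠ N : ℕ in atTop,
      Real.sqrt N * Real.exp (-(N : ℝ) * φ c) * (∫ x in a..b, f x * Real.exp ((N : ℝ) * φ x)) =
      ∫ t : ℝ, laplaceF fe φe a b c N t := by
    filter_upwards [eventually_ge_atTop 1] with N hN1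
    have hs0 : (0:ℝ) < Real.sqrt N := Real.sqrt_pos.2 (by exact_mod_cast hN1)
    have step1 : Real.exp (-(N : ℝ) * φ c) * (∫ x in a..b, f x * Real.exp ((N : ℝ) * φ x)) =
        ∫ x in a..b, fe x * Real.exp ((N:ℝ) * (φe x - φe c)) := by
      rw [← intervalIntegral.integral_const_mul]
      apply intervalIntegral.integral_congr
      intro x hx
      rw [Set.uIcc_of_le hab.le] at hx
      dsimp only
      rw [hfeeq x hx, hφeeq x hx, hφec']
      rw [show (N:ℝ) * (φ x - φ c) = -(N:ℝ) * φ c + (N:ℝ) * φ x by ring, Real.exp_add]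
      ring
    rw [mul_assoc, step1]
    have step2 : (∫ t in (Real.sqrt N * (a - c))..(Real.sqrt N * (b - c)),
          fe (t / Real.sqrt N + c) * Real.exp ((N:ℝ) * (φe (t / Real.sqrt N + c) - φe c))) =
        Real.sqrt N * ∫ x in a..b, fe x * Real.exp ((N:ℝ) * (φe x - φe c)) := by
      rw [intervalIntegral.integral_comp_div_add
        (fun x => fe x * Real.exp ((N:ℝ) * (φe x - φe c))) hs0.ne' c]
      rw [show Real.sqrt N * (a - c) / Real.sqrt N + c = a by field_simp; ring]
      rw [show Real.sqrt N * (b - c) / Real.sqrt N + c = b by field_simp; ring]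
      simp [smul_eq_mul]
    rw [← step2]
    have hpq : Real.sqrt N * (a - c) ≤ Real.sqrt N * (b - c) :=
      mul_le_mul_of_nonneg_left (by linarith) hs0.le
    rw [intervalIntegral.integral_of_le hpq]
    rw [show laplaceF fe φe a b c N = (Set.Ioc (Real.sqrt N * (a - c))
      (Real.sqrt N * (b - c))).indicator (laplaceG fe φe c N) from rfl]
    rw [MeasureTheory.integral_indicator measurableSet_Ioc]
    rfl
  exact main.congr' (Filter.EventuallyEq.symm heq)
end
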